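/- arXiv:2002.04215 — 7 statements merged into one kernel-verified Lean document; each statement's English description precedes it below -/
import Mathlib

section
/- Let A, B, A_x, B_x ≥ 0 be real numbers with (√A + √B)(√A_x + √B_x) > 0, let C_B = [(√A−√B)² + (√A_x−√B_x)²] / [2(√A+√B)(√A_x+√B_x)], and let a > 0 with a ≤ C_B. Then for every k ∈ [0,1], setting k₀₀ = k₁₁ = k and k₀₁ = k₁₀ = 1 − k, the quantity −2k₀₀(1−k₀₀)(A+A_x) − 2k₁₁(1−k₁₁)(B+B_x) + 2(|k₁₁(1−k₀₀)| + |k₀₀(1−k₁₁)|)(√(AB) + √(A_xB_x)) + 4a(|1−k₁₁|√B + |1−k₀₀|√A)(|k₀₀|√A_x + |k₁₁|√B_x) is nonpositive. -/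
/-! With `x = √A`, `y = √B`, `u = √Ax`, `v = √Bx` and `s = k (1 - k) ≥ 0`, the cross terms
`√(AB) = xy` and `√(Ax Bx) = uv` complete the squares, and the quantity becomes
`2 s (2a (x + y)(u + v) - (x - y)² - (u - v)²)`. The bracket is nonpositive by `a ≤ C_B`, once the
nonnegative denominator of `C_B` is cleared. -/

lemma feedback_form_eq (x y u v a k : ℝ) :
    -2 * k * (1 - k) * (x ^ 2 + u ^ 2) - 2 * k * (1 - k) * (y ^ 2 + v ^ 2)
        + 2 * (k * (1 - k) + k * (1 - k)) * (x * y + u * v)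
        + 4 * a * ((1 - k) * y + (1 - k) * x) * (k * u + k * v)
      = 2 * (k * (1 - k)) * (a * (2 * (x + y) * (u + v)) - ((x - y) ^ 2 + (u - v) ^ 2)) := by
  ring

lemma feedback_form_nonpos {x y u v a k : ℝ} (hk : k ∈ Set.Icc (0 : ℝ) 1)
    (ha : a * (2 * (x + y) * (u + v)) ≤ (x - y) ^ 2 + (u - v) ^ 2) :
    -2 * k * (1 - k) * (x ^ 2 + u ^ 2) - 2 * k * (1 - k) * (y ^ 2 + v ^ 2)
        + 2 * (k * (1 - k) + k * (1 - k)) * (x * y + u * v)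
        + 4 * a * ((1 - k) * y + (1 - k) * x) * (k * u + k * v) ≤ 0 := by
  rw [feedback_form_eq]
  exact mul_nonpos_of_nonneg_of_nonpos
    (mul_nonneg zero_le_two (mul_nonneg hk.1 (sub_nonneg.2 hk.2))) (sub_nonpos.2 ha)

theorem stmt2_general (A B Ax Bx a : ℝ)
    (hA : 0 ≤ A) (hB : 0 ≤ B) (hAx : 0 ≤ Ax) (hBx : 0 ≤ Bx)
    (haCB : a ≤ ((Real.sqrt A - Real.sqrt B) ^ 2 + (Real.sqrt Ax - Real.sqrt Bx) ^ 2) /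
      (2 * (Real.sqrt A + Real.sqrt B) * (Real.sqrt Ax + Real.sqrt Bx))) :
    ∀ k ∈ Set.Icc (0:ℝ) 1, ∀ k00 k11 k01 k10 : ℝ,
      k00 = k → k11 = k → k01 = 1 - k → k10 = 1 - k →
      -2 * k00 * (1 - k00) * (A + Ax) - 2 * k11 * (1 - k11) * (B + Bx)
        + 2 * (|k11 * (1 - k00)| + |k00 * (1 - k11)|) * (Real.sqrt (A * B) + Real.sqrt (Ax * Bx))
        + 4 * a * (|1 - k11| * Real.sqrt B + |1 - k00| * Real.sqrt A)
            * (|k00| * Real.sqrt Ax + |k11| * Real.sqrt Bx) ≤ 0 := by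
  intro k hk k00 k11 _ _ h00 h11 _ _
  subst k00 k11
  have hCB := mul_le_of_le_div₀ (by positivity) (by positivity) haCB
  have h := feedback_form_nonpos hk hCB
  rw [Real.sq_sqrt hA, Real.sq_sqrt hB, Real.sq_sqrt hAx, Real.sq_sqrt hBx] at h
  have h1k : 0 ≤ 1 - k := sub_nonneg.2 hk.2
  rwa [abs_of_nonneg (mul_nonneg hk.1 h1k), abs_of_nonneg h1k, abs_of_nonneg hk.1,
    Real.sqrt_mul hA, Real.sqrt_mul hAx]

/-- For nonnegative `A, B, Ax, Bx` with
`(√A + √B)(√Ax + √Bx) > 0`, with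
`C_B = ((√A−√B)² + (√Ax−√Bx)²) / (2(√A+√B)(√Ax+√Bx))` and `0 < a ≤ C_B`,
for every `k ∈ [0,1]`, setting `k₀₀ = k₁₁ = k`, `k₀₁ = k₁₀ = 1 − k`, the quantity
`−2k₀₀(1−k₀₀)(A+Ax) − 2k₁₁(1−k₁₁)(B+Bx)`
`+ 2(|k₁₁(1−k₀₀)| + |k₀₀(1−k₁₁)|)(√(AB) + √(AxBx))`
`+ 4a(|1−k₁₁|√B + |1−k₀₀|√A)(|k₀₀|√Ax + |k₁₁|√Bx)` is nonpositive. -/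
theorem stmt2 (A B Ax Bx a : ℝ)
    (hA : 0 ≤ A) (hB : 0 ≤ B) (hAx : 0 ≤ Ax) (hBx : 0 ≤ Bx)
    (hpos : 0 < (Real.sqrt A + Real.sqrt B) * (Real.sqrt Ax + Real.sqrt Bx))
    (ha : 0 < a)
    (haCB : a ≤ ((Real.sqrt A - Real.sqrt B) ^ 2 + (Real.sqrt Ax - Real.sqrt Bx) ^ 2) /
      (2 * (Real.sqrt A + Real.sqrt B) * (Real.sqrt Ax + Real.sqrt Bx))) :
    ∀ k ∈ Set.Icc (0:ℝ) 1, ∀ k00 k11 k01 k10 : ℝ,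
      k00 = k → k11 = k → k01 = 1 - k → k10 = 1 - k →
      -2 * k00 * (1 - k00) * (A + Ax) - 2 * k11 * (1 - k11) * (B + Bx)
        + 2 * (|k11 * (1 - k00)| + |k00 * (1 - k11)|) * (Real.sqrt (A * B) + Real.sqrt (Ax * Bx))
        + 4 * a * (|1 - k11| * Real.sqrt B + |1 - k00| * Real.sqrt A)
            * (|k00| * Real.sqrt Ax + |k11| * Real.sqrt Bx) ≤ 0 :=
  stmt2_general A B Ax Bx a hA hB hAx hBx haCB
end

section
/- Let ε > 0 and let h be a sufficiently smooth solution of ε∂_t h + v∂_x h − (1/ε)((1/2)h − (v²/4)h + ∂_v² h) = E(∂_v − v/2)h on [0,∞)×[0,1]×ℝ, where E(t,0) = E(t,1) = 0 for all t, and suppose h satisfies the boundary conditions h(t,0,v) = k₀₀ h(t,0,−v) + k₁₀ h(t,1,v) for v > 0 and h(t,1,v) = k₀₁ h(t,0,v) + k₁₁ h(t,1,−v) for v < 0. Then the spatial derivative satisfies the sign-flipped boundary conditions ∂_x h(t,0,v) = −k₀₀ ∂_x h(t,0,−v) + k₁₀ ∂_x h(t,1,v) for v > 0 and ∂_x h(t,1,v)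 = k₀₁ ∂_x h(t,0,v) − k₁₁ ∂_x h(t,1,−v) for v < 0. -/
open MeasureTheory Real Set

/-- The global Maxwellian `M(v) = (2π)^{-1/2} e^{-v²/2}`. -/
noncomputable def Mw (v : ℝ) : ℝ := (Real.sqrt (2 * Real.pi))⁻¹ * Real.exp (-(v ^ 2) / 2)

/-- `√M`. -/
noncomputable def sM (v : ℝ) : ℝ := Real.sqrt (Mw v)

/-- Squared `L²` norm on `Ω = [0,1] × ℝ`: `‖g‖² = ∫₀¹ ∫_ℝ g² dv dx`. -/
noncomputable def nSq (g : ℝ → ℝ → ℝ) : ℝ := ∫ x in (0:ℝ)..1, ∫ v : ℝ, (g x v) ^ 2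

/-- Partial derivative in the spatial variable `x`. -/
noncomputable def pdx (g : ℝ → ℝ → ℝ) : ℝ → ℝ → ℝ := fun x v => deriv (fun y => g y v) x

/-- `‖g‖_V² = ‖g‖² + ‖∂ₓ g‖²`. -/
noncomputable def nVSq (g : ℝ → ℝ → ℝ) : ℝ := nSq g + nSq (pdx g)

/-- `‖g‖_ω² = ‖g‖² + ‖∂_v g‖² + ‖v g‖²`. -/
noncomputable def nOmSq (g : ℝ → ℝ → ℝ) : ℝ :=
  nSq g + nSq (fun x v => deriv (g x) v) + nSq (fun x v => v * g x v)

/-- The weighted projection `(Πg)(x,v) = (∫_ℝ g(x,w)√M(w) dw)√M(v)`. -/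
noncomputable def Proj (g : ℝ → ℝ → ℝ) : ℝ → ℝ → ℝ := fun x v => (∫ w : ℝ, g x w * sM w) * sM v

/-- Boundary functional `A(t) = −∫_{-∞}^0 (v/2) h(t,0,v)² dv`. -/
noncomputable def Abd (h : ℝ → ℝ → ℝ → ℝ) (t : ℝ) : ℝ := -∫ v in Iio (0:ℝ), (v / 2) * (h t 0 v) ^ 2

/-- Boundary functional `B(t) = ∫_0^∞ (v/2) h(t,1,v)² dv`. -/
noncomputable def Bbd (h : ℝ → ℝ → ℝ → ℝ) (t : ℝ) : ℝ := ∫ v in Ioi (0:ℝ), (v / 2) * (h t 1 v) ^ 2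

/-- Boundary functional `A_x(t) = −∫_{-∞}^0 (v/2) (∂ₓh)(t,0,v)² dv`. -/
noncomputable def Axbd (h : ℝ → ℝ → ℝ → ℝ) (t : ℝ) : ℝ :=
  -∫ v in Iio (0:ℝ), (v / 2) * (pdx (h t) 0 v) ^ 2

/-- Boundary functional `B_x(t) = ∫_0^∞ (v/2) (∂ₓh)(t,1,v)² dv`. -/
noncomputable def Bxbd (h : ℝ → ℝ → ℝ → ℝ) (t : ℝ) : ℝ :=
  ∫ v in Ioi (0:ℝ), (v / 2) * (pdx (h t) 1 v) ^ 2

/-- `C_B(t) = ((√A−√B)² + (√Aₓ−√Bₓ)²)/(2(√A+√B)(√Aₓ+√Bₓ))`. -/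
noncomputable def CB (h : ℝ → ℝ → ℝ → ℝ) (t : ℝ) : ℝ :=
  ((Real.sqrt (Abd h t) - Real.sqrt (Bbd h t)) ^ 2
      + (Real.sqrt (Axbd h t) - Real.sqrt (Bxbd h t)) ^ 2) /
    (2 * (Real.sqrt (Abd h t) + Real.sqrt (Bbd h t))
      * (Real.sqrt (Axbd h t) + Real.sqrt (Bxbd h t)))

/-- The macroscopic density `σ(t,x) = ∫_ℝ h √M dv`. -/
noncomputable def dens (h : ℝ → ℝ → ℝ → ℝ) (t x : ℝ) : ℝ := ∫ v : ℝ, h t x v * sM v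

/-- The macroscopic flux `u(t,x) = ∫_ℝ v h √M dv`. -/
noncomputable def flux (h : ℝ → ℝ → ℝ → ℝ) (t x : ℝ) : ℝ := ∫ v : ℝ, v * h t x v * sM v

/-- The weighted VFP equation `ε ∂ₜh + v ∂ₓh − (1/ε) L h = E (∂ᵥ − v/2) h` on
`[0,∞) × [0,1] × ℝ`, with `L h = (1/2)h − (v²/4)h + ∂ᵥ²h` in strong form. -/
def IsVFPSolution (ε : ℝ) (E : ℝ → ℝ → ℝ) (h : ℝ → ℝ → ℝ → ℝ) : Prop :=
  ∀ t ≥ (0:ℝ), ∀ x ∈ Icc (0:ℝ) 1, ∀ v : ℝ,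
    ε * deriv (fun s => h s x v) t + v * deriv (fun y => h t y v) x
        - (1 / ε) * ((1 / 2) * h t x v - (v ^ 2 / 4) * h t x v + deriv (deriv (h t x)) v)
      = E t x * (deriv (h t x) v - (v / 2) * h t x v)


private lemma deriv_eq_zero_of_Ici {f : ℝ → ℝ} (hf : Differentiable ℝ f) {t : ℝ} (ht : 0 ≤ t)
    (h0 : ∀ s ≥ (0:ℝ), f s = 0) : deriv f t = 0 := by
  have h1 : HasDerivWithinAt f (deriv f t) (Ici 0) t := (hf t).hasDerivAt.hasDerivWithinAt
  have h2 : HasDerivWithinAt f 0 (Ici 0) t :=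
    (hasDerivWithinAt_const t (Ici 0) (0:ℝ)).congr (fun s hs => h0 s hs) (h0 t ht)
  exact (uniqueDiffOn_Ici 0 t ht).eq_deriv _ h1 h2

private lemma deriv_combo {a b : ℝ} {f g k : ℝ → ℝ} {x : ℝ}
    (hf : DifferentiableAt ℝ f x) (hg : DifferentiableAt ℝ g x) (hk : DifferentiableAt ℝ k x) :
    deriv (fun y => f y - a * g y - b * k y) x = deriv f x - a * deriv g x - b * deriv k x := by
  rw [deriv_fun_sub ((hf.fun_sub (hg.const_mul a))) (hk.const_mul b), deriv_fun_sub hf (hg.const_mul a),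
    deriv_const_mul a hg, deriv_const_mul b hk]

private lemma keylemma (ε : ℝ) {c₁ c₂ t v X₀ X₁ X₂ : ℝ} {u₀ u₁ u₂ : ℝ → ℝ → ℝ}
    (h₀ : ContDiff ℝ (⊤ : ℕ∞) (fun p : ℝ × ℝ => u₀ p.1 p.2))
    (h₁ : ContDiff ℝ (⊤ : ℕ∞) (fun p : ℝ × ℝ => u₁ p.1 p.2))
    (h₂ : ContDiff ℝ (⊤ : ℕ∞) (fun p : ℝ × ℝ => u₂ p.1 p.2))
    {S : Set ℝ} (hS : S ∈ nhds v) (ht : 0 ≤ t)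
    (hbc : ∀ s ≥ (0:ℝ), ∀ w ∈ S, u₀ s w = c₁ * u₁ s w + c₂ * u₂ s w)
    (e₀ : ε * deriv (fun s => u₀ s v) t + X₀
        - (1 / ε) * ((1 / 2) * u₀ t v - (v ^ 2 / 4) * u₀ t v + deriv (deriv (u₀ t)) v) = 0)
    (e₁ : ε * deriv (fun s => u₁ s v) t + X₁
        - (1 / ε) * ((1 / 2) * u₁ t v - (v ^ 2 / 4) * u₁ t v + deriv (deriv (u₁ t)) v) = 0)
    (e₂ : ε * deriv (fun s => u₂ s v) t + X₂
        - (1 / ε) * ((1 / 2) * u₂ t v - (v ^ 2 / 4) * u₂ t v + deriv (deriv (u₂ t)) v) = 0) :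
    X₀ = c₁ * X₁ + c₂ * X₂ := by
  -- slice smoothness
  have st : ∀ (u : ℝ → ℝ → ℝ), ContDiff ℝ (⊤ : ℕ∞) (fun p : ℝ × ℝ => u p.1 p.2) →
      ∀ w : ℝ, ContDiff ℝ (⊤ : ℕ∞) (fun s => u s w) := fun u hu w =>
    hu.comp (contDiff_id.prodMk contDiff_const)
  have sv : ∀ (u : ℝ → ℝ → ℝ), ContDiff ℝ (⊤ : ℕ∞) (fun p : ℝ × ℝ => u p.1 p.2) →
      ∀ s : ℝ, ContDiff ℝ (⊤ : ℕ∞) (u s) := fun u hu s =>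
    hu.comp (contDiff_const.prodMk contDiff_id)
  have dv : ∀ (u : ℝ → ℝ → ℝ), ContDiff ℝ (⊤ : ℕ∞) (fun p : ℝ × ℝ => u p.1 p.2) →
      ∀ s : ℝ, ContDiff ℝ (⊤ : ℕ∞) (deriv (u s)) := fun u hu s =>
    (contDiff_infty_iff_deriv.mp (sv u hu s)).2
  have hvS : v ∈ S := mem_of_mem_nhds hS
  -- time derivative of the combination vanishes
  have EqT : deriv (fun s => u₀ s v) t - c₁ * deriv (fun s => u₁ s v) t
      - c₂ * deriv (fun s => u₂ s v) t = 0 := by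
    rw [← deriv_combo (((st u₀ h₀ v).differentiable (by simp)) t)
      (((st u₁ h₁ v).differentiable (by simp)) t) (((st u₂ h₂ v).differentiable (by simp)) t)]
    refine deriv_eq_zero_of_Ici ?_ ht (fun s hs => by
      have := hbc s hs v hvS; linarith)
    exact (((st u₀ h₀ v).sub (((st u₁ h₁ v).const_smul c₁))).sub
      (((st u₂ h₂ v).const_smul c₂))).differentiable (by simp)
  -- value of the combination vanishes
  have EqVal : u₀ t v - c₁ * u₁ t v - c₂ * u₂ t v = 0 := by
    have := hbc t ht v hvS; linarith
  -- second v-derivative of the combination vanishes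
  have hev : (fun w => u₀ t w - c₁ * u₁ t w - c₂ * u₂ t w) =ᶠ[nhds v] (fun _ => (0:ℝ)) :=
    Filter.eventually_of_mem hS (fun w hw => by have := hbc t ht w hw; dsimp only; linarith)
  have EqVV : deriv (deriv (u₀ t)) v - c₁ * deriv (deriv (u₁ t)) v
      - c₂ * deriv (deriv (u₂ t)) v = 0 := by
    have hD : deriv (fun w => u₀ t w - c₁ * u₁ t w - c₂ * u₂ t w)
        = fun w => deriv (u₀ t) w - c₁ * deriv (u₁ t) w - c₂ * deriv (u₂ t) w :=
      funext fun w => deriv_combo (((sv u₀ h₀ t).differentiable (by simp)) w)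
        (((sv u₁ h₁ t).differentiable (by simp)) w) (((sv u₂ h₂ t).differentiable (by simp)) w)
    have h2 : deriv (deriv (fun w => u₀ t w - c₁ * u₁ t w - c₂ * u₂ t w)) v
        = deriv (deriv (u₀ t)) v - c₁ * deriv (deriv (u₁ t)) v - c₂ * deriv (deriv (u₂ t)) v := by
      rw [hD]
      exact deriv_combo (((dv u₀ h₀ t).differentiable (by simp)) v)
        (((dv u₁ h₁ t).differentiable (by simp)) v) (((dv u₂ h₂ t).differentiable (by simp)) v)
    have h3 : deriv (deriv (fun w => u₀ t w - c₁ * u₁ t w - c₂ * u₂ t w)) v = 0 := by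
      have := (hev.deriv.deriv).eq_of_nhds
      simpa using this
    linarith [h2, h3]
  linear_combination e₀ - c₁ * e₁ - c₂ * e₂ - ε * EqT
    + (1 / ε) * (1 / 2 - v ^ 2 / 4) * EqVal + (1 / ε) * EqVV

private lemma deriv2_comp_neg (f : ℝ → ℝ) (v : ℝ) :
    deriv (deriv (fun w => f (-w))) v = deriv (deriv f) (-v) := by
  have h1 : deriv (fun w => f (-w)) = fun w => -deriv f (-w) :=
    funext fun w => deriv_comp_neg f w
  rw [h1]
  have h2 : deriv (fun w => -deriv f (-w)) v = - deriv (fun w => deriv f (-w)) v := by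
    rw [deriv.fun_neg]
  rw [h2, deriv_comp_neg (deriv f) v]
  ring

/-- Lemma `lemma: bdy pt_x` of the paper: the spatial derivative of a
smooth solution of the weighted VFP equation satisfies sign-flipped feedback
boundary conditions. -/
theorem stmt5
    (ε k00 k01 k10 k11 : ℝ) (E : ℝ → ℝ → ℝ) (h : ℝ → ℝ → ℝ → ℝ)
    (hε : 0 < ε)
    (hsmooth : ContDiff ℝ (⊤ : ℕ∞) (fun p : ℝ × ℝ × ℝ => h p.1 p.2.1 p.2.2))
    (hPDE : IsVFPSolution ε E h)
    (hEbdy : ∀ t : ℝ, E t 0 = 0 ∧ E t 1 = 0)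
    (hbc0 : ∀ t ≥ (0:ℝ), ∀ v > (0:ℝ), h t 0 v = k00 * h t 0 (-v) + k10 * h t 1 v)
    (hbc1 : ∀ t ≥ (0:ℝ), ∀ v < (0:ℝ), h t 1 v = k01 * h t 0 v + k11 * h t 1 (-v)) :
    ∀ t ≥ (0:ℝ),
      (∀ v > (0:ℝ), pdx (h t) 0 v = -k00 * pdx (h t) 0 (-v) + k10 * pdx (h t) 1 v) ∧
      (∀ v < (0:ℝ), pdx (h t) 1 v = k01 * pdx (h t) 0 v - k11 * pdx (h t) 1 (-v)) := by
  intro t ht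
  have sm2 : ∀ (a : ℝ) (sgn : ℝ), ContDiff ℝ (⊤ : ℕ∞) (fun p : ℝ × ℝ => h p.1 a (sgn * p.2)) := by
    intro a sgn
    exact hsmooth.comp ((contDiff_fst).prodMk ((contDiff_const).prodMk (contDiff_const.mul contDiff_snd)))
  have smx : ∀ (t0 v0 : ℝ), ContDiff ℝ (⊤ : ℕ∞) (fun y : ℝ => h t0 y v0) := fun t0 v0 =>
    hsmooth.comp (contDiff_const.prodMk (contDiff_id.prodMk contDiff_const))
  have smv : ∀ (t0 x0 : ℝ), ContDiff ℝ (⊤ : ℕ∞) (h t0 x0) := fun t0 x0 =>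
    hsmooth.comp (contDiff_const.prodMk (contDiff_const.prodMk contDiff_id))
  -- the PDE with E-term removed, at boundary points
  have pde : ∀ (x : ℝ), x ∈ Icc (0:ℝ) 1 → E t x = 0 → ∀ v : ℝ,
      ε * deriv (fun s => h s x v) t + v * pdx (h t) x v
        - (1 / ε) * ((1 / 2) * h t x v - (v ^ 2 / 4) * h t x v + deriv (deriv (h t x)) v) = 0 := by
    intro x hx hE v
    have := hPDE t ht x hx v
    rw [hE] at this
    simp only [zero_mul] at this
    unfold pdx
    linarith
  have h0m : (0:ℝ) ∈ Icc (0:ℝ) 1 := by constructor <;> norm_num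
  have h1m : (1:ℝ) ∈ Icc (0:ℝ) 1 := by constructor <;> norm_num
  constructor
  · intro v hv
    have key : v * pdx (h t) 0 v
        = k00 * (-v * pdx (h t) 0 (-v)) + k10 * (v * pdx (h t) 1 v) := by
      refine keylemma ε (u₀ := fun s w => h s 0 w) (u₁ := fun s w => h s 0 (-w))
        (u₂ := fun s w => h s 1 w) (S := Ioi (0:ℝ)) ?_ ?_ ?_ (Ioi_mem_nhds hv) ht ?_ ?_ ?_ ?_
      · exact (hsmooth.comp (contDiff_fst.prodMk (contDiff_const.prodMk contDiff_snd))).of_le (by simp)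
      · have := (sm2 0 (-1)).of_le (le_rfl : ((⊤:ℕ∞) : WithTop ℕ∞) ≤ ((⊤:ℕ∞) : WithTop ℕ∞)); simpa using this
      · exact (hsmooth.comp (contDiff_fst.prodMk (contDiff_const.prodMk contDiff_snd))).of_le (by simp)
      · intro s hs w hw
        exact hbc0 s hs w hw
      · exact pde 0 h0m (hEbdy t).1 v
      · have base := pde 0 h0m (hEbdy t).1 (-v)
        have hrw : deriv (deriv (fun w : ℝ => h t 0 (-w))) v = deriv (deriv (h t 0)) (-v) :=
          deriv2_comp_neg (h t 0) v
        rw [hrw]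
        have : ((-v) ^ 2 : ℝ) = v ^ 2 := by ring
        rw [this] at base
        linarith
      · exact pde 1 h1m (hEbdy t).2 v
    have hvne : v ≠ 0 := ne_of_gt hv
    field_simp at key
    have goal : v * pdx (h t) 0 v = v * (-k00 * pdx (h t) 0 (-v) + k10 * pdx (h t) 1 v) := by
      rw [key]; ring
    exact mul_left_cancel₀ hvne goal
  · intro v hv
    have key : v * pdx (h t) 1 v
        = k01 * (v * pdx (h t) 0 v) + k11 * (-v * pdx (h t) 1 (-v)) := by
      refine keylemma ε (u₀ := fun s w => h s 1 w) (u₁ := fun s w => h s 0 w)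
        (u₂ := fun s w => h s 1 (-w)) (S := Iio (0:ℝ)) ?_ ?_ ?_ (Iio_mem_nhds hv) ht ?_ ?_ ?_ ?_
      · exact (hsmooth.comp (contDiff_fst.prodMk (contDiff_const.prodMk contDiff_snd))).of_le (by simp)
      · exact (hsmooth.comp (contDiff_fst.prodMk (contDiff_const.prodMk contDiff_snd))).of_le (by simp)
      · have := (sm2 1 (-1)).of_le (le_rfl : ((⊤:ℕ∞) : WithTop ℕ∞) ≤ ((⊤:ℕ∞) : WithTop ℕ∞)); simpa using this
      · intro s hs w hw
        exact hbc1 s hs w hw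
      · exact pde 1 h1m (hEbdy t).2 v
      · exact pde 0 h0m (hEbdy t).1 v
      · have base := pde 1 h1m (hEbdy t).2 (-v)
        have hrw : deriv (deriv (fun w : ℝ => h t 1 (-w))) v = deriv (deriv (h t 1)) (-v) :=
          deriv2_comp_neg (h t 1) v
        rw [hrw]
        have : ((-v) ^ 2 : ℝ) = v ^ 2 := by ring
        rw [this] at base
        linarith
    have hvne : v ≠ 0 := ne_of_lt hv
    have goal : v * pdx (h t) 1 v = v * (k01 * pdx (h t) 0 v - k11 * pdx (h t) 1 (-v)) := by
      rw [key]; ring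
    exact mul_left_cancel₀ hvne goal
end

section
/- Let f = f(t,x,v) be integrable with v f(t,x,·) integrable on ℝ for x ∈ {0,1}, satisfying the boundary conditions f(t,0,v) = k₀₀ f(t,0,−v) + k₁₀ f(t,1,v) for v > 0 and f(t,1,v) = k₀₁ f(t,0,v) + k₁₁ f(t,1,−v) for v < 0. If k₀₀ + k₀₁ = 1 and k₁₀ + k₁₁ = 1, then the boundary fluxes coincide: u(t,1) = u(t,0), where u(t,x) = ∫_ℝ v f(t,x,v) dv. -/
open MeasureTheory Real Set

/-! Folding the velocity line onto `v > 0` writes a flux as `∫_{v>0} v (g v - g (-v))`. On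
`v > 0` the boundary conditions express `f(t,0,v)` and `f(t,1,-v)` through the outgoing traces
`f(t,0,-v)` and `f(t,1,v)`, and since the columns of the feedback matrix sum to one, both folded
integrands become `v (k₁₀ f(t,1,v) - k₀₁ f(t,0,-v))`. -/

theorem integral_mul_eq_setIntegral_Ioi_mul_sub_neg {g : ℝ → ℝ}
    (hg : Integrable (fun v : ℝ => v * g v)) :
    ∫ v : ℝ, v * g v = ∫ v in Ioi (0 : ℝ), v * (g v - g (-v)) := by
  have hneg : Integrable (fun v : ℝ => -v * g (-v)) := hg.comp_neg
  calc ∫ v : ℝ, v * g v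
      = (∫ v in Iic (0 : ℝ), v * g v) + ∫ v in Ioi (0 : ℝ), v * g v :=
        (intervalIntegral.integral_Iic_add_Ioi hg.integrableOn hg.integrableOn).symm
    _ = (∫ v in Ioi (0 : ℝ), -v * g (-v)) + ∫ v in Ioi (0 : ℝ), v * g v := by
        rw [integral_comp_neg_Ioi 0 (fun v => v * g v), neg_zero]
    _ = ∫ v in Ioi (0 : ℝ), v * (g v - g (-v)) := by
        rw [← integral_add hneg.integrableOn hg.integrableOn]
        congr 1 with v
        ring

theorem stmt8_general
    (f : ℝ → ℝ → ℝ → ℝ) (k00 k01 k10 k11 t : ℝ)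
    (hint0 : Integrable (fun v : ℝ => v * f t 0 v))
    (hint1 : Integrable (fun v : ℝ => v * f t 1 v))
    (hbc0 : ∀ v > (0:ℝ), f t 0 v = k00 * f t 0 (-v) + k10 * f t 1 v)
    (hbc1 : ∀ v < (0:ℝ), f t 1 v = k01 * f t 0 v + k11 * f t 1 (-v))
    (hk1 : k00 + k01 = 1) (hk2 : k10 + k11 = 1) :
    (∫ v : ℝ, v * f t 1 v) = ∫ v : ℝ, v * f t 0 v := by
  rw [integral_mul_eq_setIntegral_Ioi_mul_sub_neg hint1,
    integral_mul_eq_setIntegral_Ioi_mul_sub_neg hint0]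
  refine setIntegral_congr_fun measurableSet_Ioi fun v (hv : 0 < v) => ?_
  have hbc0v := hbc0 v hv
  have hbc1v := hbc1 (-v) (neg_neg_of_pos hv)
  rw [neg_neg] at hbc1v
  linear_combination -v * hbc1v - v * hbc0v - v * f t 0 (-v) * hk1 - v * f t 1 v * hk2

/-- Lemma `lemma: bdy for u` of the paper: if the feedback matrix
satisfies `k₀₀ + k₀₁ = 1` and `k₁₀ + k₁₁ = 1`, the boundary fluxes coincide:
`u(t,1) = u(t,0)`, where `u(t,x) = ∫_ℝ v f(t,x,v) dv`. -/
theorem stmt8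
    (f : ℝ → ℝ → ℝ → ℝ) (k00 k01 k10 k11 t : ℝ)
    (hintf0 : Integrable (fun v : ℝ => f t 0 v))
    (hintf1 : Integrable (fun v : ℝ => f t 1 v))
    (hint0 : Integrable (fun v : ℝ => v * f t 0 v))
    (hint1 : Integrable (fun v : ℝ => v * f t 1 v))
    (hbc0 : ∀ v > (0:ℝ), f t 0 v = k00 * f t 0 (-v) + k10 * f t 1 v)
    (hbc1 : ∀ v < (0:ℝ), f t 1 v = k01 * f t 0 v + k11 * f t 1 (-v))
    (hk1 : k00 + k01 = 1) (hk2 : k10 + k11 = 1) :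
    (∫ v : ℝ, v * f t 1 v) = ∫ v : ℝ, v * f t 0 v :=
  stmt8_general f k00 k01 k10 k11 t hint0 hint1 hbc0 hbc1 hk1 hk2
end

section
/- Let h = h(t,x,v) be such that h(t,x,·) and ∂_x h(t,x,·) are square integrable against |v| on ℝ for x ∈ {0,1}, satisfying the boundary conditions h(t,0,v) = k₀₀ h(t,0,−v) + k₁₀ h(t,1,v) for v > 0, h(t,1,v) = k₀₁ h(t,0,v) + k₁₁ h(t,1,−v) for v < 0, and the derivative boundary conditions ∂_x h(t,0,v) = −k₀₀ ∂_x h(t,0,−v) + k₁₀ ∂_x h(t,1,v) for v > 0, ∂_x h(t,1,v) = k₀₁ ∂_x h(t,0,v) − k₁₁ ∂_x h(t,1,−v) for v < 0. Assume k₀₀ + k₀₁ = 1 and k₁₁ + k₁₀ = 1, and let a ≥ 0. Then −∫_ℝ (v/2)(h²(t,1,v) − h²(t,0,v)) dv − ∫_ℝ (v/2)((∂_x h)²(t,1,v) − (∂_x h)²(t,0,v)) dv − a(u∂_x u(t,1) − u∂_x u(t,0)) ≤ I(t,ε), where I(t,ε) = −2k₀₀(1−k₀₀)(A + A_x) − 2k₁₁(1−k₁₁)(B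 + B_x) + 2(|k₁₁(1−k₀₀)| + |k₀₀(1−k₁₁)|)(√(AB) + √(A_xB_x)) + 4a(|1−k₁₁|√B + |1−k₀₀|√A)(|k₀₀|√A_x + |k₁₁|√B_x). -/
open MeasureTheory Real Set

/-!
Split every velocity integral at `v = 0` and reflect `v ↦ -v`: all boundary quantities become
integrals over `v > 0` of the outgoing traces `h(t,0,-v)` and `h(t,1,v)`, in terms of which the
boundary conditions express the incoming ones. The energy terms then form a quadratic form in the
outgoing traces; its diagonal gives the `k(1 - k)` terms, and its cross term `∫ v h(t,0,-v) h(t,1,v)`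
is bounded by `2√(AB)` via Cauchy–Schwarz for the weight `v/2`. Since `k₀₀ + k₀₁ = k₁₁ + k₁₀ = 1`,
the flux `u` takes the same value at both walls, so the last term is `-a u (∂ₓu(1) - ∂ₓu(0))`; each
factor is bounded by Cauchy–Schwarz against `√M`, using `∫_{v>0} v M ≤ 1`.
-/

section WeightedCauchySchwarz

variable {α : Type*} [MeasurableSpace α] {μ : Measure α} {w f g : α → ℝ}

lemma integrable_mul_mul_of_integrable_mul_sq (hw : ∀ᵐ x ∂μ, 0 ≤ w x)
    (hwm : AEStronglyMeasurable w μ) (hfm : AEStronglyMeasurable f μ)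
    (hgm : AEStronglyMeasurable g μ) (hf : Integrable (fun x => w x * f x ^ 2) μ)
    (hg : Integrable (fun x => w x * g x ^ 2) μ) :
    Integrable (fun x => w x * f x * g x) μ := by
  refine Integrable.mono' ((hf.add hg).div_const 2) ((hwm.mul hfm).mul hgm) ?_
  filter_upwards [hw] with x hx
  simp only [Pi.add_apply]
  rw [Real.norm_eq_abs, abs_mul, abs_mul, abs_of_nonneg hx, mul_assoc]
  have : |f x| * |g x| ≤ (f x ^ 2 + g x ^ 2) / 2 := by
    nlinarith [sq_nonneg (|f x| - |g x|), sq_abs (f x), sq_abs (g x)]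
  nlinarith [mul_le_mul_of_nonneg_left this hx]

lemma abs_integral_mul_mul_le_sqrt_mul_sqrt (hw : ∀ᵐ x ∂μ, 0 ≤ w x)
    (hwm : AEStronglyMeasurable w μ) (hfm : AEStronglyMeasurable f μ)
    (hgm : AEStronglyMeasurable g μ) (hf : Integrable (fun x => w x * f x ^ 2) μ)
    (hg : Integrable (fun x => w x * g x ^ 2) μ) :
    |∫ x, w x * f x * g x ∂μ| ≤ √(∫ x, w x * f x ^ 2 ∂μ) * √(∫ x, w x * g x ^ 2 ∂μ) := by
  have hfg := integrable_mul_mul_of_integrable_mul_sq hw hwm hfm hgm hf hg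
  have hF : 0 ≤ ∫ x, w x * f x ^ 2 ∂μ :=
    integral_nonneg_of_ae (by filter_upwards [hw] with x hx using by positivity)
  -- `t ↦ ∫ w (t g + f)²` is a nonnegative quadratic polynomial
  have hquad : ∀ t : ℝ, 0 ≤ (∫ x, w x * g x ^ 2 ∂μ) * (t * t)
      + 2 * (∫ x, w x * f x * g x ∂μ) * t + ∫ x, w x * f x ^ 2 ∂μ := by
    intro t
    have hexp : (fun x => w x * (t * g x + f x) ^ 2) = fun x =>
        (t * t) * (w x * g x ^ 2) + (2 * t) * (w x * f x * g x) + w x * f x ^ 2 := by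
      funext x; ring
    have hnn : 0 ≤ ∫ x, w x * (t * g x + f x) ^ 2 ∂μ :=
      integral_nonneg_of_ae (by filter_upwards [hw] with x hx using by positivity)
    have hsum : Integrable (fun x => (t * t) * (w x * g x ^ 2) + (2 * t) * (w x * f x * g x)) μ :=
      (hg.const_mul _).add (hfg.const_mul _)
    rw [hexp, integral_add hsum hf,
      integral_add (hg.const_mul _) (hfg.const_mul _), integral_const_mul,
      integral_const_mul] at hnn
    linarith
  have hdisc := discrim_le_zero hquad
  rw [← Real.sqrt_mul hF]
  apply Real.abs_le_sqrt
  unfold discrim at hdisc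
  nlinarith

end WeightedCauchySchwarz

lemma integral_eq_integral_Ioi_add_comp_neg {φ : ℝ → ℝ} (hφ : Integrable φ) :
    ∫ v, φ v = ∫ v in Ioi (0:ℝ), (φ v + φ (-v)) := by
  rw [integral_add hφ.integrableOn hφ.comp_neg.integrableOn, integral_comp_neg_Ioi, neg_zero,
    add_comm, intervalIntegral.integral_Iic_add_Ioi hφ.integrableOn hφ.integrableOn]

lemma Mw_pos (v : ℝ) : 0 < Mw v := by unfold Mw; positivity

lemma sM_pos (v : ℝ) : 0 < sM v := Real.sqrt_pos.mpr (Mw_pos v)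

lemma sM_sq (v : ℝ) : sM v ^ 2 = Mw v := Real.sq_sqrt (Mw_pos v).le

lemma sM_neg (v : ℝ) : sM (-v) = sM v := by simp [sM, Mw]

@[fun_prop]
lemma measurable_sM : Measurable sM := by unfold sM Mw; fun_prop

lemma hasDerivAt_neg_Mw (v : ℝ) : HasDerivAt (fun w => -Mw w) (v * Mw v) v := by
  have hsq : HasDerivAt (fun w : ℝ => -(w ^ 2) / 2) (-v) v :=
    ((hasDerivAt_pow 2 v).neg.div_const 2).congr_deriv (by ring)
  unfold Mw
  exact (hsq.exp.const_mul (√(2 * π))⁻¹).neg.congr_deriv (by ring)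

lemma tendsto_neg_Mw_atTop : Filter.Tendsto (fun w => -Mw w) Filter.atTop (nhds 0) := by
  have hexp : Filter.Tendsto (fun w : ℝ => exp (-(w ^ 2) / 2)) Filter.atTop (nhds 0) :=
    tendsto_exp_atBot.comp ((Filter.tendsto_neg_atBot_iff.mpr
      (Filter.tendsto_pow_atTop two_ne_zero)).atBot_div_const two_pos)
  simpa [Mw] using (hexp.const_mul (√(2 * π))⁻¹).neg

lemma integrableOn_Ioi_mul_Mw : IntegrableOn (fun v => v * Mw v) (Ioi 0) :=
  integrableOn_Ioi_deriv_of_nonneg (hasDerivAt_neg_Mw 0).continuousAt.continuousWithinAt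
    (fun v _ => hasDerivAt_neg_Mw v) (fun v hv => mul_nonneg (le_of_lt hv) (Mw_pos v).le)
    tendsto_neg_Mw_atTop

lemma integral_Ioi_mul_Mw_le_one : ∫ v in Ioi (0:ℝ), v * Mw v ≤ 1 := by
  rw [integral_Ioi_of_hasDerivAt_of_tendsto (hasDerivAt_neg_Mw 0).continuousAt.continuousWithinAt
    (fun v _ => hasDerivAt_neg_Mw v) integrableOn_Ioi_mul_Mw tendsto_neg_Mw_atTop]
  have : 1 ≤ √(2 * π) := Real.one_le_sqrt.mpr (by nlinarith [Real.pi_gt_three])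
  simpa [Mw] using inv_le_one_of_one_le₀ this

noncomputable def energyIio (f : ℝ → ℝ) : ℝ := -∫ v in Iio (0:ℝ), (v / 2) * f v ^ 2

noncomputable def energyIoi (f : ℝ → ℝ) : ℝ := ∫ v in Ioi (0:ℝ), (v / 2) * f v ^ 2

noncomputable def fluxIoi (f : ℝ → ℝ) : ℝ := ∫ v in Ioi (0:ℝ), v * f v * sM v

lemma energyIoi_nonneg (f : ℝ → ℝ) : 0 ≤ energyIoi f :=
  setIntegral_nonneg measurableSet_Ioi fun _ hv =>
    mul_nonneg (div_nonneg (le_of_lt hv) zero_le_two) (sq_nonneg _)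

lemma energyIio_eq_energyIoi_comp_neg (f : ℝ → ℝ) :
    energyIio f = energyIoi (fun v => f (-v)) := by
  have hrefl := integral_comp_neg_Ioi 0 (fun v => (v / 2) * f v ^ 2)
  rw [neg_zero, integral_Iic_eq_integral_Iio] at hrefl
  rw [energyIio, energyIoi, ← hrefl, ← integral_neg]
  congr 1; funext v; ring

lemma energyIio_nonneg (f : ℝ → ℝ) : 0 ≤ energyIio f :=
  energyIio_eq_energyIoi_comp_neg f ▸ energyIoi_nonneg _

lemma integrable_half_mul_sq {f : ℝ → ℝ} (hm : AEStronglyMeasurable f)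
    (hf : Integrable fun v => |v| * f v ^ 2) : Integrable fun v => (v / 2) * f v ^ 2 := by
  refine (hf.div_const 2).mono' (by fun_prop) (Filter.Eventually.of_forall fun v => ?_)
  rw [Real.norm_eq_abs, abs_mul, abs_div, abs_two, abs_of_nonneg (sq_nonneg (f v))]
  exact le_of_eq (by ring)

lemma abs_integral_Ioi_half_mul_mul_le {f g : ℝ → ℝ}
    (hfm : AEStronglyMeasurable f) (hgm : AEStronglyMeasurable g)
    (hf : IntegrableOn (fun v => (v / 2) * f v ^ 2) (Ioi 0))
    (hg : IntegrableOn (fun v => (v / 2) * g v ^ 2) (Ioi 0)) :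
    |∫ v in Ioi (0:ℝ), (v / 2) * f v * g v| ≤ √(energyIoi f) * √(energyIoi g) :=
  abs_integral_mul_mul_le_sqrt_mul_sqrt
    (ae_restrict_of_forall_mem measurableSet_Ioi fun v hv => div_nonneg (le_of_lt hv) zero_le_two)
    (by fun_prop) hfm.restrict hgm.restrict hf hg

lemma aestronglyMeasurable_of_integrable_mul_mul_sM {f : ℝ → ℝ}
    (hf : Integrable fun v => v * f v * sM v) : AEStronglyMeasurable f := by
  refine (hf.aestronglyMeasurable.mul
    (measurable_id.mul measurable_sM).inv.aestronglyMeasurable).congr ?_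
  filter_upwards [Measure.ae_ne volume 0] with v hv
  have hs : sM v ≠ 0 := (sM_pos v).ne'
  simp only [Pi.mul_apply, Pi.inv_apply, id]
  field_simp

lemma integral_mul_mul_sM_eq_integral_Ioi {f : ℝ → ℝ}
    (hf : Integrable fun v => v * f v * sM v) :
    ∫ v, v * f v * sM v = ∫ v in Ioi (0:ℝ), v * (f v - f (-v)) * sM v := by
  rw [integral_eq_integral_Ioi_add_comp_neg hf]
  congr 1; funext v
  rw [sM_neg]; ring

lemma integral_Ioi_mul_add_mul_sM {g₀ g₁ : ℝ → ℝ}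
    (h₀ : IntegrableOn (fun v => v * g₀ v * sM v) (Ioi 0))
    (h₁ : IntegrableOn (fun v => v * g₁ v * sM v) (Ioi 0)) (α β : ℝ) :
    ∫ v in Ioi (0:ℝ), v * (α * g₀ v + β * g₁ v) * sM v = α * fluxIoi g₀ + β * fluxIoi g₁ := by
  rw [fluxIoi, fluxIoi, ← integral_const_mul, ← integral_const_mul,
    ← integral_add (h₀.const_mul α) (h₁.const_mul β)]
  congr 1; funext v; ring

lemma integrableOn_Ioi_half_mul_two_mul_sM_sq :
    IntegrableOn (fun v => (v / 2) * (2 * sM v) ^ 2) (Ioi 0) :=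
  IntegrableOn.congr_fun (integrableOn_Ioi_mul_Mw.const_mul 2)
    (fun v _ => by simp only [mul_pow, sM_sq]; ring) measurableSet_Ioi

lemma energyIoi_two_mul_sM_le : energyIoi (fun v => 2 * sM v) ≤ 2 := by
  have h : energyIoi (fun v => 2 * sM v) = 2 * ∫ v in Ioi (0:ℝ), v * Mw v := by
    rw [energyIoi, ← integral_const_mul]
    congr 1; funext v; rw [mul_pow, sM_sq]; ring
  linarith [integral_Ioi_mul_Mw_le_one]

lemma integrableOn_Ioi_mul_mul_sM {f : ℝ → ℝ} (hm : AEStronglyMeasurable f)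
    (hf : IntegrableOn (fun v => (v / 2) * f v ^ 2) (Ioi 0)) :
    IntegrableOn (fun v => v * f v * sM v) (Ioi 0) := by
  rw [show (fun v => v * f v * sM v) = fun v => (v / 2) * f v * (2 * sM v) by funext v; ring]
  exact integrable_mul_mul_of_integrable_mul_sq
    (ae_restrict_of_forall_mem measurableSet_Ioi fun v hv => div_nonneg (le_of_lt hv) zero_le_two)
    (by fun_prop) hm.restrict (by fun_prop) hf integrableOn_Ioi_half_mul_two_mul_sM_sq

lemma abs_fluxIoi_le {f : ℝ → ℝ} (hm : AEStronglyMeasurable f)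
    (hf : IntegrableOn (fun v => (v / 2) * f v ^ 2) (Ioi 0)) :
    |fluxIoi f| ≤ √2 * √(energyIoi f) := by
  rw [fluxIoi, show (fun v => v * f v * sM v) = fun v => (v / 2) * f v * (2 * sM v) by
    funext v; ring, mul_comm]
  calc _ ≤ √(energyIoi f) * √(energyIoi fun v => 2 * sM v) :=
        abs_integral_Ioi_half_mul_mul_le hm (by fun_prop) hf
          integrableOn_Ioi_half_mul_two_mul_sM_sq
    _ ≤ √(energyIoi f) * √2 := by gcongr; exact energyIoi_two_mul_sM_le

/-- `f₀` and `f₁` play the traces `h(t,0,·)` and `h(t,1,·)`; the incoming halves (`v > 0` at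
`x = 0`, `v < 0` at `x = 1`) are determined by the outgoing ones. -/
structure IsFeedbackTracePair (f₀ f₁ : ℝ → ℝ) (c₁ c₂ d₁ d₂ : ℝ) : Prop where
  aestronglyMeasurable₀ : AEStronglyMeasurable f₀
  aestronglyMeasurable₁ : AEStronglyMeasurable f₁
  integrable₀ : Integrable fun v => |v| * f₀ v ^ 2
  integrable₁ : Integrable fun v => |v| * f₁ v ^ 2
  bc₀ : ∀ v > 0, f₀ v = c₁ * f₀ (-v) + c₂ * f₁ v
  bc₁ : ∀ v < 0, f₁ v = d₁ * f₀ v + d₂ * f₁ (-v)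

namespace IsFeedbackTracePair

variable {f₀ f₁ : ℝ → ℝ} {c₁ c₂ d₁ d₂ : ℝ}

lemma aestronglyMeasurable_reflect (hp : IsFeedbackTracePair f₀ f₁ c₁ c₂ d₁ d₂) :
    AEStronglyMeasurable fun v => f₀ (-v) :=
  hp.aestronglyMeasurable₀.comp_quasiMeasurePreserving
    (Measure.measurePreserving_neg volume).quasiMeasurePreserving

lemma integrableOn_energy_reflect (hp : IsFeedbackTracePair f₀ f₁ c₁ c₂ d₁ d₂) :
    IntegrableOn (fun v => (v / 2) * f₀ (-v) ^ 2) (Ioi 0) :=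
  (integrable_half_mul_sq hp.aestronglyMeasurable_reflect
    (by simpa using hp.integrable₀.comp_neg)).integrableOn

lemma integrableOn_energy_out (hp : IsFeedbackTracePair f₀ f₁ c₁ c₂ d₁ d₂) :
    IntegrableOn (fun v => (v / 2) * f₁ v ^ 2) (Ioi 0) :=
  (integrable_half_mul_sq hp.aestronglyMeasurable₁ hp.integrable₁).integrableOn

lemma neg_integral_half_mul_sq_sub_eq (hp : IsFeedbackTracePair f₀ f₁ c₁ c₂ d₁ d₂) :
    -∫ v, (v / 2) * (f₁ v ^ 2 - f₀ v ^ 2) =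
      (c₁ ^ 2 + d₁ ^ 2 - 1) * energyIio f₀ + (c₂ ^ 2 + d₂ ^ 2 - 1) * energyIoi f₁
        + 2 * (c₁ * c₂ + d₁ * d₂) * ∫ v in Ioi (0:ℝ), (v / 2) * f₀ (-v) * f₁ v := by
  have hA := hp.integrableOn_energy_reflect
  have hB := hp.integrableOn_energy_out
  have hX : IntegrableOn (fun v => (v / 2) * f₀ (-v) * f₁ v) (Ioi 0) :=
    integrable_mul_mul_of_integrable_mul_sq
      (ae_restrict_of_forall_mem measurableSet_Ioi fun v hv =>
        div_nonneg (le_of_lt hv) zero_le_two)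
      (by fun_prop) hp.aestronglyMeasurable_reflect.restrict hp.aestronglyMeasurable₁.restrict
      hA hB
  have hφ : Integrable fun v => -((v / 2) * (f₁ v ^ 2 - f₀ v ^ 2)) :=
    ((integrable_half_mul_sq hp.aestronglyMeasurable₁ hp.integrable₁).sub
      (integrable_half_mul_sq hp.aestronglyMeasurable₀ hp.integrable₀)).neg.congr
      (Filter.Eventually.of_forall fun v => by simp only [Pi.neg_apply, Pi.sub_apply]; ring)
  have hpointwise : ∀ v ∈ Ioi (0:ℝ),
      -((v / 2) * (f₁ v ^ 2 - f₀ v ^ 2)) + -((-v / 2) * (f₁ (-v) ^ 2 - f₀ (-v) ^ 2)) =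
        (c₁ ^ 2 + d₁ ^ 2 - 1) * ((v / 2) * f₀ (-v) ^ 2)
          + (c₂ ^ 2 + d₂ ^ 2 - 1) * ((v / 2) * f₁ v ^ 2)
          + 2 * (c₁ * c₂ + d₁ * d₂) * ((v / 2) * f₀ (-v) * f₁ v) := by
    intro v hv
    have hv' : -v < 0 := neg_lt_zero.mpr hv
    rw [hp.bc₀ v hv, hp.bc₁ (-v) hv', neg_neg]
    ring
  have hAB : IntegrableOn (fun v => (c₁ ^ 2 + d₁ ^ 2 - 1) * ((v / 2) * f₀ (-v) ^ 2)
      + (c₂ ^ 2 + d₂ ^ 2 - 1) * ((v / 2) * f₁ v ^ 2)) (Ioi 0) :=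
    (hA.const_mul _).add (hB.const_mul _)
  rw [← integral_neg, integral_eq_integral_Ioi_add_comp_neg hφ,
    setIntegral_congr_fun measurableSet_Ioi hpointwise, integral_add hAB (hX.const_mul _),
    integral_add (hA.const_mul _) (hB.const_mul _), integral_const_mul, integral_const_mul,
    integral_const_mul, energyIio_eq_energyIoi_comp_neg]
  rfl

lemma neg_integral_half_mul_sq_sub_le (hp : IsFeedbackTracePair f₀ f₁ c₁ c₂ d₁ d₂) :
    -∫ v, (v / 2) * (f₁ v ^ 2 - f₀ v ^ 2) ≤
      (c₁ ^ 2 + d₁ ^ 2 - 1) * energyIio f₀ + (c₂ ^ 2 + d₂ ^ 2 - 1) * energyIoi f₁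
        + 2 * (|c₁ * c₂| + |d₁ * d₂|) * √(energyIio f₀ * energyIoi f₁) := by
  have hX := abs_integral_Ioi_half_mul_mul_le hp.aestronglyMeasurable_reflect
    hp.aestronglyMeasurable₁ hp.integrableOn_energy_reflect hp.integrableOn_energy_out
  rw [← energyIio_eq_energyIoi_comp_neg, ← Real.sqrt_mul (energyIio_nonneg f₀)] at hX
  rw [hp.neg_integral_half_mul_sq_sub_eq]
  suffices 2 * (c₁ * c₂ + d₁ * d₂) * ∫ v in Ioi (0:ℝ), (v / 2) * f₀ (-v) * f₁ v
      ≤ 2 * (|c₁ * c₂| + |d₁ * d₂|) * √(energyIio f₀ * energyIoi f₁) by linarith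
  calc 2 * (c₁ * c₂ + d₁ * d₂) * ∫ v in Ioi (0:ℝ), (v / 2) * f₀ (-v) * f₁ v
      ≤ 2 * |c₁ * c₂ + d₁ * d₂| * |∫ v in Ioi (0:ℝ), (v / 2) * f₀ (-v) * f₁ v| := by
        rw [mul_assoc, mul_assoc, ← abs_mul]
        exact mul_le_mul_of_nonneg_left (le_abs_self _) zero_le_two
    _ ≤ 2 * (|c₁ * c₂| + |d₁ * d₂|) * √(energyIio f₀ * energyIoi f₁) := by
        gcongr
        exact abs_add_le _ _

lemma integrableOn_flux_reflect (hp : IsFeedbackTracePair f₀ f₁ c₁ c₂ d₁ d₂) :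
    IntegrableOn (fun v => v * f₀ (-v) * sM v) (Ioi 0) :=
  integrableOn_Ioi_mul_mul_sM hp.aestronglyMeasurable_reflect hp.integrableOn_energy_reflect

lemma integrableOn_flux_out (hp : IsFeedbackTracePair f₀ f₁ c₁ c₂ d₁ d₂) :
    IntegrableOn (fun v => v * f₁ v * sM v) (Ioi 0) :=
  integrableOn_Ioi_mul_mul_sM hp.aestronglyMeasurable₁ hp.integrableOn_energy_out

lemma flux_at_zero_eq (hp : IsFeedbackTracePair f₀ f₁ c₁ c₂ d₁ d₂)
    (hf₀ : Integrable fun v => v * f₀ v * sM v) :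
    ∫ v, v * f₀ v * sM v = (c₁ - 1) * fluxIoi (fun v => f₀ (-v)) + c₂ * fluxIoi f₁ := by
  rw [integral_mul_mul_sM_eq_integral_Ioi hf₀, ← integral_Ioi_mul_add_mul_sM
    hp.integrableOn_flux_reflect hp.integrableOn_flux_out]
  refine setIntegral_congr_fun measurableSet_Ioi fun v hv => ?_
  rw [hp.bc₀ v hv]; ring

lemma flux_at_one_eq (hp : IsFeedbackTracePair f₀ f₁ c₁ c₂ d₁ d₂)
    (hf₁ : Integrable fun v => v * f₁ v * sM v) :
    ∫ v, v * f₁ v * sM v = -d₁ * fluxIoi (fun v => f₀ (-v)) + (1 - d₂) * fluxIoi f₁ := by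
  rw [integral_mul_mul_sM_eq_integral_Ioi hf₁, ← integral_Ioi_mul_add_mul_sM
    hp.integrableOn_flux_reflect hp.integrableOn_flux_out]
  refine setIntegral_congr_fun measurableSet_Ioi fun v hv => ?_
  rw [hp.bc₁ (-v) (neg_lt_zero.mpr hv), neg_neg]; ring

lemma abs_fluxIoi_reflect_le (hp : IsFeedbackTracePair f₀ f₁ c₁ c₂ d₁ d₂) :
    |fluxIoi fun v => f₀ (-v)| ≤ √2 * √(energyIio f₀) := by
  rw [energyIio_eq_energyIoi_comp_neg]
  exact abs_fluxIoi_le hp.aestronglyMeasurable_reflect hp.integrableOn_energy_reflect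

lemma abs_fluxIoi_out_le (hp : IsFeedbackTracePair f₀ f₁ c₁ c₂ d₁ d₂) :
    |fluxIoi f₁| ≤ √2 * √(energyIoi f₁) :=
  abs_fluxIoi_le hp.aestronglyMeasurable₁ hp.integrableOn_energy_out

lemma neg_mul_flux_sub_le {g₀ g₁ : ℝ → ℝ} {k₀ k₁ a : ℝ}
    (hp : IsFeedbackTracePair f₀ f₁ k₀ (1 - k₁) (1 - k₀) k₁)
    (hq : IsFeedbackTracePair g₀ g₁ (-k₀) (1 - k₁) (1 - k₀) (-k₁)) (ha : 0 ≤ a)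
    (hf₀ : Integrable fun v => v * f₀ v * sM v) (hf₁ : Integrable fun v => v * f₁ v * sM v)
    (hg₀ : Integrable fun v => v * g₀ v * sM v) (hg₁ : Integrable fun v => v * g₁ v * sM v) :
    -(a * ((∫ v, v * f₁ v * sM v) * (∫ v, v * g₁ v * sM v)
        - (∫ v, v * f₀ v * sM v) * (∫ v, v * g₀ v * sM v)))
      ≤ 4 * a * (|1 - k₁| * √(energyIoi f₁) + |1 - k₀| * √(energyIio f₀))
          * (|k₀| * √(energyIio g₀) + |k₁| * √(energyIoi g₁)) := by
  set U := (k₀ - 1) * fluxIoi (fun v => f₀ (-v)) + (1 - k₁) * fluxIoi f₁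
  set V := 2 * k₀ * fluxIoi (fun v => g₀ (-v)) + 2 * k₁ * fluxIoi g₁
  have hu₀ : ∫ v, v * f₀ v * sM v = U := hp.flux_at_zero_eq hf₀
  have hu₁ : ∫ v, v * f₁ v * sM v = U := by rw [hp.flux_at_one_eq hf₁]; ring
  have hjump : (∫ v, v * g₁ v * sM v) - ∫ v, v * g₀ v * sM v = V := by
    rw [hq.flux_at_one_eq hg₁, hq.flux_at_zero_eq hg₀]; ring
  have hU : |U| ≤ √2 * (|1 - k₁| * √(energyIoi f₁) + |1 - k₀| * √(energyIio f₀)) :=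
    calc |U| ≤ |1 - k₀| * |fluxIoi (fun v => f₀ (-v))| + |1 - k₁| * |fluxIoi f₁| := by
          rw [abs_sub_comm 1 k₀, ← abs_mul, ← abs_mul]; exact abs_add_le _ _
      _ ≤ |1 - k₀| * (√2 * √(energyIio f₀)) + |1 - k₁| * (√2 * √(energyIoi f₁)) := by
          gcongr
          exacts [hp.abs_fluxIoi_reflect_le, hp.abs_fluxIoi_out_le]
      _ = _ := by ring
  have hV : |V| ≤ 2 * √2 * (|k₀| * √(energyIio g₀) + |k₁| * √(energyIoi g₁)) :=
    calc |V| ≤ 2 * |k₀| * |fluxIoi (fun v => g₀ (-v))| + 2 * |k₁| * |fluxIoi g₁| := by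
          rw [← abs_two, ← abs_mul, ← abs_mul, ← abs_mul, ← abs_mul]; exact abs_add_le _ _
      _ ≤ 2 * |k₀| * (√2 * √(energyIio g₀)) + 2 * |k₁| * (√2 * √(energyIoi g₁)) := by
          gcongr
          exacts [hq.abs_fluxIoi_reflect_le, hq.abs_fluxIoi_out_le]
      _ = _ := by ring
  rw [hu₀, hu₁, ← mul_sub, hjump]
  calc -(a * (U * V)) ≤ a * (|U| * |V|) := by
        rw [← abs_mul, ← mul_neg]; exact mul_le_mul_of_nonneg_left (neg_le_abs _) ha
    _ ≤ a * ((√2 * (|1 - k₁| * √(energyIoi f₁) + |1 - k₀| * √(energyIio f₀)))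
          * (2 * √2 * (|k₀| * √(energyIio g₀) + |k₁| * √(energyIoi g₁)))) := by gcongr
    _ = _ := by
        linear_combination 2 * a * (|1 - k₁| * √(energyIoi f₁) + |1 - k₀| * √(energyIio f₀))
          * (|k₀| * √(energyIio g₀) + |k₁| * √(energyIoi g₁)) * Real.mul_self_sqrt zero_le_two

end IsFeedbackTracePair

/-- Lemma `lemma: negative RHS est` of the paper: estimate of the
boundary terms by the quantity `I(t,ε)` built from the boundary functionals
`A, B, A_x, B_x` and the entries of the feedback matrix. -/
theorem stmt9
    (h : ℝ → ℝ → ℝ → ℝ) (k00 k01 k10 k11 a t : ℝ)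
    -- square integrability against |v| of h and ∂ₓh at the boundary
    (hint0 : Integrable (fun v : ℝ => |v| * (h t 0 v) ^ 2))
    (hint1 : Integrable (fun v : ℝ => |v| * (h t 1 v) ^ 2))
    (hintx0 : Integrable (fun v : ℝ => |v| * (pdx (h t) 0 v) ^ 2))
    (hintx1 : Integrable (fun v : ℝ => |v| * (pdx (h t) 1 v) ^ 2))
    -- integrability of the flux integrands
    (hu0 : Integrable (fun v : ℝ => v * h t 0 v * sM v))
    (hu1 : Integrable (fun v : ℝ => v * h t 1 v * sM v))
    (hux0 : Integrable (fun v : ℝ => v * pdx (h t) 0 v * sM v))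
    (hux1 : Integrable (fun v : ℝ => v * pdx (h t) 1 v * sM v))
    -- differentiation under the integral sign for the flux
    (hdiffux : ∀ x : ℝ, deriv (fun y => flux h t y) x = ∫ v : ℝ, v * pdx (h t) x v * sM v)
    -- boundary conditions for h and ∂ₓh
    (hbc0 : ∀ v > (0:ℝ), h t 0 v = k00 * h t 0 (-v) + k10 * h t 1 v)
    (hbc1 : ∀ v < (0:ℝ), h t 1 v = k01 * h t 0 v + k11 * h t 1 (-v))
    (hbcx0 : ∀ v > (0:ℝ), pdx (h t) 0 v = -k00 * pdx (h t) 0 (-v) + k10 * pdx (h t) 1 v)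
    (hbcx1 : ∀ v < (0:ℝ), pdx (h t) 1 v = k01 * pdx (h t) 0 v - k11 * pdx (h t) 1 (-v))
    (hk1 : k00 + k01 = 1) (hk2 : k11 + k10 = 1) (ha : 0 ≤ a) :
    -(∫ v : ℝ, (v / 2) * ((h t 1 v) ^ 2 - (h t 0 v) ^ 2))
        - (∫ v : ℝ, (v / 2) * ((pdx (h t) 1 v) ^ 2 - (pdx (h t) 0 v) ^ 2))
        - a * (flux h t 1 * deriv (fun y => flux h t y) 1
                - flux h t 0 * deriv (fun y => flux h t y) 0)
      ≤ -2 * k00 * (1 - k00) * (Abd h t + Axbd h t)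
          - 2 * k11 * (1 - k11) * (Bbd h t + Bxbd h t)
          + 2 * (|k11 * (1 - k00)| + |k00 * (1 - k11)|)
              * (Real.sqrt (Abd h t * Bbd h t) + Real.sqrt (Axbd h t * Bxbd h t))
          + 4 * a * (|1 - k11| * Real.sqrt (Bbd h t) + |1 - k00| * Real.sqrt (Abd h t))
              * (|k00| * Real.sqrt (Axbd h t) + |k11| * Real.sqrt (Bxbd h t)) := by
  obtain rfl : k01 = 1 - k00 := by linarith
  obtain rfl : k10 = 1 - k11 := by linarith
  have hp : IsFeedbackTracePair (h t 0) (h t 1) k00 (1 - k11) (1 - k00) k11 :=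
    ⟨aestronglyMeasurable_of_integrable_mul_mul_sM hu0,
      aestronglyMeasurable_of_integrable_mul_mul_sM hu1, hint0, hint1, hbc0, hbc1⟩
  have hq : IsFeedbackTracePair (pdx (h t) 0) (pdx (h t) 1) (-k00) (1 - k11) (1 - k00) (-k11) :=
    ⟨aestronglyMeasurable_of_integrable_mul_mul_sM hux0,
      aestronglyMeasurable_of_integrable_mul_mul_sM hux1, hintx0, hintx1, hbcx0,
      fun v hv => by rw [hbcx1 v hv]; ring⟩
  have hE := hp.neg_integral_half_mul_sq_sub_le
  have hEx := hq.neg_integral_half_mul_sq_sub_le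
  have hflux := hp.neg_mul_flux_sub_le hq ha hu0 hu1 hux0 hux1
  rw [hdiffux 0, hdiffux 1]
  simp only [Abd, Bbd, Axbd, Bxbd, flux, energyIio, energyIoi] at hE hEx hflux ⊢
  simp only [abs_mul, abs_neg] at hE hEx ⊢
  linear_combination hE + hEx + hflux
end

section
/- Let 0 < ε ≤ 1 and let h = h(x,v) be smooth on Ω = [0,1]×ℝ with ‖h‖_ω < ∞ and rapid decay in v, and let E = E(x) be bounded on [0,1]. Then ⟨E(∂_v − v/2)h, h⟩_{L²(Ω)} ≤ ‖E‖_{L^∞} ((ε/2)‖h‖² + (1/(2ε))‖(1−Π)h‖_ω²). -/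
open MeasureTheory Real Set

lemma sM_eq (v : ℝ) : sM v = Real.sqrt (Real.sqrt (2 * Real.pi))⁻¹ * Real.exp (-(v ^ 2) / 4) := by
  have h2 : Real.sqrt (Real.exp (-(v ^ 2) / 2)) = Real.exp (-(v ^ 2) / 4) := by
    rw [show (-(v ^ 2) / 2) = (-(v ^ 2) / 4) + (-(v ^ 2) / 4) by ring, Real.exp_add,
      Real.sqrt_mul_self (Real.exp_pos _).le]
  rw [sM, Mw, Real.sqrt_mul (by positivity), h2, Real.sqrt_inv]

lemma sM_hasDeriv (v : ℝ) : HasDerivAt sM (-(v / 2) * sM v) v := by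
  have h1 : HasDerivAt (fun v : ℝ => -(v ^ 2) / 4) (-(v / 2)) v := by
    have := (hasDerivAt_pow 2 v).neg.div_const 4
    refine this.congr_deriv ?_; ring
  have h2 := (h1.exp.const_mul (Real.sqrt (Real.sqrt (2 * Real.pi))⁻¹))
  have h3 : sM = fun v => Real.sqrt (Real.sqrt (2 * Real.pi))⁻¹ * Real.exp (-(v ^ 2) / 4) :=
    funext sM_eq
  rw [h3]
  refine h2.congr_deriv ?_
  show _ = -(v / 2) * (Real.sqrt (Real.sqrt (2 * Real.pi))⁻¹ * Real.exp (-(v ^ 2) / 4))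
  ring

lemma sM_cont : Continuous sM := by
  rw [funext sM_eq]
  continuity

lemma gauss_int (n : ℕ) : Integrable (fun v : ℝ => |v| ^ n * sM v ^ 2) := by
  have h := ((integrable_rpow_mul_exp_neg_mul_sq (b := 1/2) (by norm_num)
    (s := n) ((by norm_num : (-1:ℝ) < 0).trans_le (Nat.cast_nonneg n))).const_mul
    (Real.sqrt (2 * Real.pi))⁻¹).abs
  apply h.congr
  filter_upwards with v
  rw [sM_sq, Mw, Real.rpow_natCast, abs_mul, abs_mul, abs_pow,
    abs_of_nonneg (inv_nonneg.mpr (Real.sqrt_nonneg _)), abs_of_pos (Real.exp_pos _)]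
  ring_nf

lemma sM_sq_integral : ∫ v : ℝ, sM v ^ 2 = 1 := by
  have h1 : ∀ v : ℝ, sM v ^ 2 = (Real.sqrt (2 * Real.pi))⁻¹ * Real.exp (-(1/2) * v ^ 2) := by
    intro v; rw [sM_sq, Mw]; ring_nf
  rw [funext h1, MeasureTheory.integral_const_mul, integral_gaussian]
  rw [show (π / (1/2)) = 2 * π by ring]
  rw [inv_mul_cancel₀ (Real.sqrt_ne_zero'.mpr (by positivity))]

lemma young (ε a b : ℝ) (hε : 0 < ε) : |a * b| ≤ ε / 2 * b ^ 2 + 1 / (2 * ε) * a ^ 2 := by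
  have h1 : |a| * |b| * (2 * ε) ≤ ε ^ 2 * b ^ 2 + a ^ 2 := by
    nlinarith [sq_nonneg (|a| - ε * |b|), sq_abs a, sq_abs b]
  have h2 : ε / 2 * b ^ 2 + 1 / (2 * ε) * a ^ 2 = (ε ^ 2 * b ^ 2 + a ^ 2) / (2 * ε) := by
    field_simp
  rw [abs_mul, h2, le_div_iff₀ (by linarith)]
  exact h1




lemma int_f (f f' : ℝ → ℝ) (hfc : Continuous f)
    (hint : ∀ n : ℕ, Integrable (fun v => |v| ^ n * ((f v) ^ 2 + (f' v) ^ 2))) (n : ℕ) :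
    Integrable (fun v => |v| ^ n * (f v) ^ 2) := by
  apply (hint n).mono' ((by fun_prop : Continuous fun v => |v| ^ n * (f v) ^ 2).aestronglyMeasurable)
  filter_upwards with v
  have : (0:ℝ) ≤ |v| ^ n * (f v) ^ 2 := by positivity
  rw [Real.norm_eq_abs, abs_of_nonneg this]
  nlinarith [pow_nonneg (abs_nonneg v) n, sq_nonneg (f' v)]

lemma int_f' (f f' : ℝ → ℝ) (hf'c : Continuous f')
    (hint : ∀ n : ℕ, Integrable (fun v => |v| ^ n * ((f v) ^ 2 + (f' v) ^ 2))) (n : ℕ) :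
    Integrable (fun v => |v| ^ n * (f' v) ^ 2) := by
  apply (hint n).mono' ((by fun_prop : Continuous fun v => |v| ^ n * (f' v) ^ 2).aestronglyMeasurable)
  filter_upwards with v
  have : (0:ℝ) ≤ |v| ^ n * (f' v) ^ 2 := by positivity
  rw [Real.norm_eq_abs, abs_of_nonneg this]
  nlinarith [pow_nonneg (abs_nonneg v) n, sq_nonneg (f v)]

lemma int_g (f f' : ℝ → ℝ) (c : ℝ) (hfc : Continuous f)
    (hint : ∀ n : ℕ, Integrable (fun v => |v| ^ n * ((f v) ^ 2 + (f' v) ^ 2))) (n : ℕ) :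
    Integrable (fun v => |v| ^ n * (f v - c * sM v) ^ 2) := by
  have hsMc := sM_cont
  have hb : Integrable (fun v => 2 * (|v| ^ n * (f v) ^ 2) + 2 * c ^ 2 * (|v| ^ n * sM v ^ 2)) :=
    ((int_f f f' hfc hint n).const_mul 2).add ((gauss_int n).const_mul (2 * c ^ 2))
  apply hb.mono' ((by fun_prop : Continuous fun v => |v| ^ n * (f v - c * sM v) ^ 2).aestronglyMeasurable)
  filter_upwards with v
  have : (0:ℝ) ≤ |v| ^ n * (f v - c * sM v) ^ 2 := by positivity
  rw [Real.norm_eq_abs, abs_of_nonneg this]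
  nlinarith [pow_nonneg (abs_nonneg v) n, sq_nonneg (f v + c * sM v), sq_nonneg (f v - c * sM v)]

lemma int_gp (f f' : ℝ → ℝ) (c : ℝ) (hf'c : Continuous f')
    (hint : ∀ n : ℕ, Integrable (fun v => |v| ^ n * ((f v) ^ 2 + (f' v) ^ 2))) (n : ℕ) :
    Integrable (fun v => |v| ^ n * (f' v + c * (v / 2) * sM v) ^ 2) := by
  have hsMc := sM_cont
  have hb : Integrable (fun v => 2 * (|v| ^ n * (f' v) ^ 2) + c ^ 2 / 2 * (|v| ^ (n + 2) * sM v ^ 2)) :=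
    ((int_f' f f' hf'c hint n).const_mul 2).add ((gauss_int (n + 2)).const_mul (c ^ 2 / 2))
  apply hb.mono' ((by fun_prop : Continuous fun v => |v| ^ n * (f' v + c * (v / 2) * sM v) ^ 2).aestronglyMeasurable)
  filter_upwards with v
  have h0 : (0:ℝ) ≤ |v| ^ n * (f' v + c * (v / 2) * sM v) ^ 2 := by positivity
  rw [Real.norm_eq_abs, abs_of_nonneg h0]
  have hv2 : |v| ^ (n + 2) = |v| ^ n * v ^ 2 := by rw [pow_add, sq_abs]
  rw [hv2]
  nlinarith [pow_nonneg (abs_nonneg v) n, sq_nonneg (f' v - c * (v / 2) * sM v),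
    sq_nonneg (f' v + c * (v / 2) * sM v)]

lemma ibp1 (f f' : ℝ → ℝ) (hf : ∀ v, HasDerivAt f (f' v) v)
    (hfc : Continuous f) (hf'c : Continuous f')
    (hint : ∀ n : ℕ, Integrable (fun v => |v| ^ n * ((f v) ^ 2 + (f' v) ^ 2))) :
    ∫ v : ℝ, f v * f' v = 0 := by
  have hint0 : Integrable (fun v => (f v) ^ 2 + (f' v) ^ 2) := by simpa using hint 0
  have hd : ∀ v, HasDerivAt (fun v => (f v) ^ 2) (2 * (f v * f' v)) v := fun v => by
    have := (hf v).pow 2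
    refine this.congr_deriv ?_; push_cast; ring
  have hF : Integrable (fun v => (f v) ^ 2) := by simpa using int_f f f' hfc hint 0
  have hG : Integrable (fun v => 2 * (f v * f' v)) := by
    apply hint0.mono' (Continuous.aestronglyMeasurable (by fun_prop))
    filter_upwards with v
    rw [Real.norm_eq_abs, abs_mul, abs_mul, abs_two]
    nlinarith [sq_nonneg (|f v| - |f' v|), abs_nonneg (f v), abs_nonneg (f' v),
      sq_abs (f v), sq_abs (f' v)]
  have h0 := integral_eq_zero_of_hasDerivAt_of_integrable hd hG hF
  rw [integral_const_mul] at h0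
  linarith

lemma int_vggp (f f' : ℝ → ℝ) (c : ℝ)
    (hfc : Continuous f) (hf'c : Continuous f')
    (hint : ∀ n : ℕ, Integrable (fun v => |v| ^ n * ((f v) ^ 2 + (f' v) ^ 2))) :
    Integrable (fun v => v * (f v - c * sM v) * (f' v + c * (v / 2) * sM v)) := by
  have hsMc := sM_cont
  have hb : Integrable (fun v =>
      (1/2) * (|v| ^ 1 * (f v - c * sM v) ^ 2) + (1/2) * (|v| ^ 1 * (f' v + c * (v / 2) * sM v) ^ 2)) :=
    ((int_g f f' c hfc hint 1).const_mul _).add ((int_gp f f' c hf'c hint 1).const_mul _)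
  apply hb.mono' (Continuous.aestronglyMeasurable (by fun_prop))
  filter_upwards with v
  rw [Real.norm_eq_abs, abs_mul, abs_mul, pow_one]
  nlinarith [sq_nonneg (|f v - c * sM v| - |f' v + c * (v / 2) * sM v|), abs_nonneg v,
    sq_abs (f v - c * sM v), sq_abs (f' v + c * (v / 2) * sM v),
    abs_nonneg (f v - c * sM v), abs_nonneg (f' v + c * (v / 2) * sM v),
    mul_nonneg (abs_nonneg v) (sq_nonneg (|f v - c * sM v| - |f' v + c * (v / 2) * sM v|))]

lemma ibp2 (f f' : ℝ → ℝ) (c : ℝ) (hf : ∀ v, HasDerivAt f (f' v) v)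
    (hfc : Continuous f) (hf'c : Continuous f')
    (hint : ∀ n : ℕ, Integrable (fun v => |v| ^ n * ((f v) ^ 2 + (f' v) ^ 2))) :
    ∫ v : ℝ, v * (f v - c * sM v) * (f' v + c * (v / 2) * sM v)
      = -(1/2) * ∫ v : ℝ, (f v - c * sM v) ^ 2 := by
  have hsMc := sM_cont
  have hg : ∀ v, HasDerivAt (fun v => f v - c * sM v) (f' v + c * (v / 2) * sM v) v := fun v => by
    have := (hf v).sub ((sM_hasDeriv v).const_mul c)
    refine this.congr_deriv ?_; ring
  have hd : ∀ v, HasDerivAt (fun v => v * (f v - c * sM v) ^ 2)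
      ((f v - c * sM v) ^ 2 + 2 * (v * (f v - c * sM v) * (f' v + c * (v / 2) * sM v))) v := by
    intro v
    have := (hasDerivAt_id v).mul ((hg v).pow 2)
    simp only [id_eq] at this
    refine this.congr_deriv ?_; push_cast; simp only [Pi.pow_apply]; ring
  have hF : Integrable (fun v => v * (f v - c * sM v) ^ 2) := by
    apply (int_g f f' c hfc hint 1).mono' (Continuous.aestronglyMeasurable (by fun_prop))
    filter_upwards with v
    rw [Real.norm_eq_abs, abs_mul, abs_pow, sq_abs, pow_one]
  have hg0 : Integrable (fun v => (f v - c * sM v) ^ 2) := by simpa using int_g f f' c hfc hint 0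
  have hvggp := int_vggp f f' c hfc hf'c hint
  have hG : Integrable (fun v =>
      (f v - c * sM v) ^ 2 + 2 * (v * (f v - c * sM v) * (f' v + c * (v / 2) * sM v))) :=
    hg0.add (hvggp.const_mul 2)
  have h0 := integral_eq_zero_of_hasDerivAt_of_integrable hd hG hF
  rw [MeasureTheory.integral_add hg0 (hvggp.const_mul 2), integral_const_mul] at h0
  linarith

lemma int_K (f f' : ℝ → ℝ) (hfc : Continuous f) (hf'c : Continuous f')
    (hint : ∀ n : ℕ, Integrable (fun v => |v| ^ n * ((f v) ^ 2 + (f' v) ^ 2))) :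
    Integrable (fun v => (f' v + v / 2 * f v) ^ 2) := by
  have hb : Integrable (fun v => 2 * (|v| ^ 0 * (f' v) ^ 2) + (1/2) * (|v| ^ 2 * (f v) ^ 2)) :=
    ((int_f' f f' hf'c hint 0).const_mul 2).add ((int_f f f' hfc hint 2).const_mul _)
  apply hb.mono' (Continuous.aestronglyMeasurable (by fun_prop))
  filter_upwards with v
  rw [Real.norm_eq_abs, abs_of_nonneg (sq_nonneg _), pow_zero, sq_abs]
  nlinarith [sq_nonneg (f' v - v / 2 * f v), sq_nonneg (f' v + v / 2 * f v)]

lemma int_Kf (f f' : ℝ → ℝ) (hfc : Continuous f) (hf'c : Continuous f')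
    (hint : ∀ n : ℕ, Integrable (fun v => |v| ^ n * ((f v) ^ 2 + (f' v) ^ 2))) :
    Integrable (fun v => (f' v + v / 2 * f v) * f v) := by
  have hb : Integrable (fun v => (1/2) * ((f' v + v / 2 * f v) ^ 2) + (1/2) * (|v| ^ 0 * (f v) ^ 2)) :=
    ((int_K f f' hfc hf'c hint).const_mul _).add ((int_f f f' hfc hint 0).const_mul _)
  apply hb.mono' (Continuous.aestronglyMeasurable (by fun_prop))
  filter_upwards with v
  rw [Real.norm_eq_abs, abs_mul, pow_zero]
  nlinarith [sq_nonneg (|f' v + v / 2 * f v| - |f v|), sq_abs (f' v + v / 2 * f v), sq_abs (f v),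
    abs_nonneg (f' v + v / 2 * f v), abs_nonneg (f v)]

lemma perx (ε Esup e : ℝ) (f f' : ℝ → ℝ) (c : ℝ) (hε : 0 < ε)
    (hf : ∀ v, HasDerivAt f (f' v) v) (hfc : Continuous f) (hf'c : Continuous f')
    (hint : ∀ n : ℕ, Integrable (fun v => |v| ^ n * ((f v) ^ 2 + (f' v) ^ 2)))
    (he : |e| ≤ Esup) :
    ∫ v : ℝ, e * (f' v - v / 2 * f v) * f v
      ≤ Esup * (ε / 2 * (∫ v : ℝ, (f v) ^ 2)
          + 1 / (2 * ε) * ((∫ v : ℝ, (f v - c * sM v) ^ 2)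
            + (∫ v : ℝ, (f' v + c * (v / 2) * sM v) ^ 2)
            + ∫ v : ℝ, (v * (f v - c * sM v)) ^ 2)) := by
  have hsMc := sM_cont
  have hEsup0 : 0 ≤ Esup := (abs_nonneg e).trans he
  -- integrability
  have if0 : Integrable (fun v => (f v) ^ 2) := by simpa using int_f f f' hfc hint 0
  have iff' : Integrable (fun v => f v * f' v) := by
    have hb : Integrable (fun v => (1/2) * (|v| ^ 0 * ((f v) ^ 2 + (f' v) ^ 2))) :=
      (hint 0).const_mul _
    apply hb.mono' (Continuous.aestronglyMeasurable (by fun_prop))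
    filter_upwards with v
    rw [Real.norm_eq_abs, abs_mul, pow_zero]
    nlinarith [sq_nonneg (|f v| - |f' v|), sq_abs (f v), sq_abs (f' v),
      abs_nonneg (f v), abs_nonneg (f' v)]
  have ivf2 : Integrable (fun v => v / 2 * (f v) ^ 2) := by
    apply ((int_f f f' hfc hint 1).const_mul 1).mono'
      (Continuous.aestronglyMeasurable (by fun_prop))
    filter_upwards with v
    rw [Real.norm_eq_abs, abs_mul, abs_pow, sq_abs, one_mul, pow_one, abs_div, abs_two]
    nlinarith [abs_nonneg v, sq_nonneg (f v)]
  have ig0 : Integrable (fun v => (f v - c * sM v) ^ 2) := by simpa using int_g f f' c hfc hint 0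
  have igp0 : Integrable (fun v => (f' v + c * (v / 2) * sM v) ^ 2) := by
    simpa using int_gp f f' c hf'c hint 0
  have iS : Integrable (fun v => (v * (f v - c * sM v)) ^ 2) := by
    apply (int_g f f' c hfc hint 2).congr
    filter_upwards with v
    rw [sq_abs]; ring
  have ivggp := int_vggp f f' c hfc hf'c hint
  have iK := int_K f f' hfc hf'c hint
  have iKf := int_Kf f f' hfc hf'c hint
  -- step 1: the integral equals -(e * ∫ K f)
  have hsplit1 : ∫ v : ℝ, e * (f' v - v / 2 * f v) * f v
      = e * ((∫ v : ℝ, f v * f' v) - ∫ v : ℝ, v / 2 * (f v) ^ 2) := by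
    rw [← MeasureTheory.integral_sub iff' ivf2, ← integral_const_mul]
    congr 1; funext v; ring
  have hsplit2 : ∫ v : ℝ, (f' v + v / 2 * f v) * f v
      = (∫ v : ℝ, f v * f' v) + ∫ v : ℝ, v / 2 * (f v) ^ 2 := by
    rw [← MeasureTheory.integral_add iff' ivf2]
    congr 1; funext v; ring
  have hibp := ibp1 f f' hf hfc hf'c hint
  have hT : ∫ v : ℝ, e * (f' v - v / 2 * f v) * f v
      = -(e * ∫ v : ℝ, (f' v + v / 2 * f v) * f v) := by
    rw [hsplit1, hsplit2, hibp]; ring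
  -- step 2: bound |∫ K f|
  have hintK2 : |∫ v : ℝ, (f' v + v / 2 * f v) * f v|
      ≤ ε / 2 * (∫ v : ℝ, (f v) ^ 2) + 1 / (2 * ε) * ∫ v : ℝ, (f' v + v / 2 * f v) ^ 2 := by
    have h1 : |∫ v : ℝ, (f' v + v / 2 * f v) * f v| ≤ ∫ v : ℝ, |f' v + v / 2 * f v| * |f v| := by
      simpa [Real.norm_eq_abs] using
        MeasureTheory.norm_integral_le_integral_norm (μ := volume)
          (fun v : ℝ => (f' v + v / 2 * f v) * f v)
    refine h1.trans ?_
    have iKfabs : Integrable (fun v => |f' v + v / 2 * f v| * |f v|) := by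
      apply iKf.abs.congr
      filter_upwards with v
      rw [abs_mul]
    have h2 : ∫ v : ℝ, |f' v + v / 2 * f v| * |f v|
        ≤ ∫ v : ℝ, (ε / 2 * (f v) ^ 2 + 1 / (2 * ε) * (f' v + v / 2 * f v) ^ 2) := by
      apply MeasureTheory.integral_mono iKfabs ((if0.const_mul _).add (iK.const_mul _))
      intro v
      simp only [Pi.add_apply]
      rw [← abs_mul]
      exact young ε (f' v + v / 2 * f v) (f v) hε
    refine h2.trans_eq ?_
    rw [MeasureTheory.integral_add (if0.const_mul (ε / 2)) (iK.const_mul (1 / (2 * ε))),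
      integral_const_mul, integral_const_mul]
  -- step 3: ∫ K² ≤ Q + R + S
  have hK2 : ∫ v : ℝ, (f' v + v / 2 * f v) ^ 2
      ≤ (∫ v : ℝ, (f v - c * sM v) ^ 2) + (∫ v : ℝ, (f' v + c * (v / 2) * sM v) ^ 2)
        + ∫ v : ℝ, (v * (f v - c * sM v)) ^ 2 := by
    have hQ0 : 0 ≤ ∫ v : ℝ, (f v - c * sM v) ^ 2 := integral_nonneg fun v => sq_nonneg _
    have hS0 : 0 ≤ ∫ v : ℝ, (v * (f v - c * sM v)) ^ 2 := integral_nonneg fun v => sq_nonneg _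
    have hexp : ∫ v : ℝ, (f' v + v / 2 * f v) ^ 2
        = (∫ v : ℝ, (f' v + c * (v / 2) * sM v) ^ 2)
          + ((∫ v : ℝ, v * (f v - c * sM v) * (f' v + c * (v / 2) * sM v))
            + (1/4) * ∫ v : ℝ, (v * (f v - c * sM v)) ^ 2) := by
      have e1 : ∫ v : ℝ, (f' v + v / 2 * f v) ^ 2
          = ∫ v : ℝ, ((f' v + c * (v / 2) * sM v) ^ 2
            + (v * (f v - c * sM v) * (f' v + c * (v / 2) * sM v)
              + (1/4) * (v * (f v - c * sM v)) ^ 2)) := by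
        congr 1; funext v; ring
      have h4 : Integrable (fun v => v * (f v - c * sM v) * (f' v + c * (v / 2) * sM v)
          + 1/4 * (v * (f v - c * sM v)) ^ 2) := ivggp.add (iS.const_mul (1/4 : ℝ))
      rw [e1, MeasureTheory.integral_add igp0 h4,
        MeasureTheory.integral_add ivggp (iS.const_mul (1/4 : ℝ)), integral_const_mul]
    rw [hexp, ibp2 f f' c hf hfc hf'c hint]
    linarith
  -- combine
  rw [hT]
  have habs : -(e * ∫ v : ℝ, (f' v + v / 2 * f v) * f v)
      ≤ |e| * |∫ v : ℝ, (f' v + v / 2 * f v) * f v| :=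
    (neg_le_abs _).trans_eq (abs_mul e _)
  refine habs.trans ?_
  have hinner : |∫ v : ℝ, (f' v + v / 2 * f v) * f v|
      ≤ ε / 2 * (∫ v : ℝ, (f v) ^ 2)
        + 1 / (2 * ε) * ((∫ v : ℝ, (f v - c * sM v) ^ 2)
          + (∫ v : ℝ, (f' v + c * (v / 2) * sM v) ^ 2)
          + ∫ v : ℝ, (v * (f v - c * sM v)) ^ 2) := by
    refine hintK2.trans ?_
    have := mul_le_mul_of_nonneg_left hK2 (by positivity : (0:ℝ) ≤ 1 / (2 * ε))
    linarith
  exact mul_le_mul he hinner (abs_nonneg _) hEsup0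

lemma int_fsM (f f' : ℝ → ℝ) (hfc : Continuous f)
    (hint : ∀ n : ℕ, Integrable (fun v => |v| ^ n * ((f v) ^ 2 + (f' v) ^ 2))) :
    Integrable (fun v => f v * sM v) := by
  have hsMc := sM_cont
  have hb : Integrable (fun v => (1/2) * (|v| ^ 0 * (f v) ^ 2) + (1/2) * (|v| ^ 0 * sM v ^ 2)) :=
    ((int_f f f' hfc hint 0).const_mul _).add ((gauss_int 0).const_mul _)
  apply hb.mono' (Continuous.aestronglyMeasurable (by fun_prop))
  filter_upwards with v
  rw [Real.norm_eq_abs, abs_mul, pow_zero]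
  nlinarith [sq_nonneg (|f v| - |sM v|), sq_abs (f v), sq_abs (sM v),
    abs_nonneg (f v), abs_nonneg (sM v)]

lemma eq_Q (f f' : ℝ → ℝ) (c : ℝ) (hfc : Continuous f)
    (hint : ∀ n : ℕ, Integrable (fun v => |v| ^ n * ((f v) ^ 2 + (f' v) ^ 2)))
    (hc : c = ∫ w : ℝ, f w * sM w) :
    ∫ v : ℝ, (f v - c * sM v) ^ 2 = (∫ v : ℝ, (f v) ^ 2) - c ^ 2 := by
  have hsMc := sM_cont
  have if0 : Integrable (fun v => (f v) ^ 2) := by simpa using int_f f f' hfc hint 0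
  have isM2 : Integrable (fun v => sM v ^ 2) := by simpa using gauss_int 0
  have ifsM := int_fsM f f' hfc hint
  have e1 : ∫ v : ℝ, (f v - c * sM v) ^ 2
      = ∫ v : ℝ, ((f v) ^ 2 + (c ^ 2 * sM v ^ 2 + (-(2 * c)) * (f v * sM v))) := by
    congr 1; funext v; ring
  have h4 : Integrable (fun v => c ^ 2 * sM v ^ 2 + (-(2 * c)) * (f v * sM v)) :=
    (isM2.const_mul (c ^ 2)).add (ifsM.const_mul (-(2 * c)))
  rw [e1, MeasureTheory.integral_add if0 h4,
    MeasureTheory.integral_add (isM2.const_mul (c ^ 2)) (ifsM.const_mul (-(2 * c))),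
    integral_const_mul, integral_const_mul, sM_sq_integral, ← hc]
  ring

lemma csq_le (f f' : ℝ → ℝ) (c : ℝ) (hfc : Continuous f)
    (hint : ∀ n : ℕ, Integrable (fun v => |v| ^ n * ((f v) ^ 2 + (f' v) ^ 2)))
    (hc : c = ∫ w : ℝ, f w * sM w) :
    c ^ 2 ≤ ∫ v : ℝ, (f v) ^ 2 := by
  have h1 := eq_Q f f' c hfc hint hc
  have h2 : 0 ≤ ∫ v : ℝ, (f v - c * sM v) ^ 2 := integral_nonneg fun v => sq_nonneg _
  linarith

lemma bound_Q (f f' : ℝ → ℝ) (c : ℝ) (hfc : Continuous f)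
    (hint : ∀ n : ℕ, Integrable (fun v => |v| ^ n * ((f v) ^ 2 + (f' v) ^ 2)))
    (hc : c = ∫ w : ℝ, f w * sM w) :
    ∫ v : ℝ, (f v - c * sM v) ^ 2 ≤ ∫ v : ℝ, (f v) ^ 2 := by
  have := eq_Q f f' c hfc hint hc
  nlinarith [sq_nonneg c]

lemma bound_R (f f' : ℝ → ℝ) (c : ℝ) (hfc : Continuous f) (hf'c : Continuous f')
    (hint : ∀ n : ℕ, Integrable (fun v => |v| ^ n * ((f v) ^ 2 + (f' v) ^ 2)))
    (hc : c = ∫ w : ℝ, f w * sM w) :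
    ∫ v : ℝ, (f' v + c * (v / 2) * sM v) ^ 2
      ≤ 2 * (∫ v : ℝ, (f' v) ^ 2)
        + (∫ v : ℝ, |v| ^ 2 * sM v ^ 2) / 2 * ∫ v : ℝ, (f v) ^ 2 := by
  have hsMc := sM_cont
  have igp0 : Integrable (fun v => (f' v + c * (v / 2) * sM v) ^ 2) := by
    simpa using int_gp f f' c hf'c hint 0
  have if'0 : Integrable (fun v => (f' v) ^ 2) := by simpa using int_f' f f' hf'c hint 0
  have iv2sM : Integrable (fun v => |v| ^ 2 * sM v ^ 2) := gauss_int 2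
  have h1 : ∫ v : ℝ, (f' v + c * (v / 2) * sM v) ^ 2
      ≤ ∫ v : ℝ, (2 * (f' v) ^ 2 + c ^ 2 / 2 * (|v| ^ 2 * sM v ^ 2)) := by
    apply MeasureTheory.integral_mono igp0 ((if'0.const_mul 2).add (iv2sM.const_mul (c ^ 2 / 2)))
    intro v
    simp only [Pi.add_apply]
    rw [sq_abs]
    nlinarith [sq_nonneg (f' v - c * (v / 2) * sM v), sq_nonneg (c * sM v * v)]
  rw [MeasureTheory.integral_add (if'0.const_mul 2) (iv2sM.const_mul (c ^ 2 / 2)),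
    integral_const_mul, integral_const_mul] at h1
  have hcs := csq_le f f' c hfc hint hc
  have hI2 : 0 ≤ ∫ v : ℝ, |v| ^ 2 * sM v ^ 2 := integral_nonneg fun v => by positivity
  nlinarith

lemma bound_S (f f' : ℝ → ℝ) (c : ℝ) (hfc : Continuous f)
    (hint : ∀ n : ℕ, Integrable (fun v => |v| ^ n * ((f v) ^ 2 + (f' v) ^ 2)))
    (hc : c = ∫ w : ℝ, f w * sM w) :
    ∫ v : ℝ, (v * (f v - c * sM v)) ^ 2
      ≤ 2 * (∫ v : ℝ, (v * f v) ^ 2)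
        + 2 * (∫ v : ℝ, |v| ^ 2 * sM v ^ 2) * ∫ v : ℝ, (f v) ^ 2 := by
  have hsMc := sM_cont
  have iS : Integrable (fun v => (v * (f v - c * sM v)) ^ 2) := by
    apply (int_g f f' c hfc hint 2).congr
    filter_upwards with v
    rw [sq_abs]; ring
  have ivf2 : Integrable (fun v => (v * f v) ^ 2) := by
    apply (int_f f f' hfc hint 2).congr
    filter_upwards with v
    rw [sq_abs]; ring
  have iv2sM : Integrable (fun v => |v| ^ 2 * sM v ^ 2) := gauss_int 2
  have h1 : ∫ v : ℝ, (v * (f v - c * sM v)) ^ 2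
      ≤ ∫ v : ℝ, (2 * (v * f v) ^ 2 + 2 * c ^ 2 * (|v| ^ 2 * sM v ^ 2)) := by
    apply MeasureTheory.integral_mono iS ((ivf2.const_mul 2).add (iv2sM.const_mul (2 * c ^ 2)))
    intro v
    simp only [Pi.add_apply]
    rw [sq_abs]
    nlinarith [sq_nonneg (v * f v + c * v * sM v), sq_nonneg (v * f v - c * v * sM v)]
  rw [MeasureTheory.integral_add (ivf2.const_mul 2) (iv2sM.const_mul (2 * c ^ 2)),
    integral_const_mul, integral_const_mul] at h1
  have hcs := csq_le f f' c hfc hint hc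
  have hI2 : 0 ≤ ∫ v : ℝ, |v| ^ 2 * sM v ^ 2 := integral_nonneg fun v => by positivity
  nlinarith

lemma deriv_section_hasDeriv {h : ℝ → ℝ → ℝ} (hs : ContDiff ℝ (⊤ : ℕ∞) (fun p : ℝ × ℝ => h p.1 p.2))
    (x v : ℝ) :
    HasDerivAt (h x) (fderiv ℝ (fun p : ℝ × ℝ => h p.1 p.2) (x, v) (0, 1)) v := by
  have h1 : HasFDerivAt (fun p : ℝ × ℝ => h p.1 p.2)
      (fderiv ℝ (fun p : ℝ × ℝ => h p.1 p.2) (x, v)) (x, v) :=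
    (hs.differentiable (by simp) (x, v)).hasFDerivAt
  have h2 : HasDerivAt (fun v : ℝ => ((x, v) : ℝ × ℝ)) (0, 1) v :=
    HasDerivAt.prodMk (hasDerivAt_const v x) (hasDerivAt_id v)
  exact h1.comp_hasDerivAt v h2

lemma deriv_section_cont {h : ℝ → ℝ → ℝ} (hs : ContDiff ℝ (⊤ : ℕ∞) (fun p : ℝ × ℝ => h p.1 p.2)) :
    Continuous (fun p : ℝ × ℝ => deriv (h p.1) p.2) := by
  have he : (fun p : ℝ × ℝ => deriv (h p.1) p.2)
      = fun p : ℝ × ℝ => fderiv ℝ (fun p : ℝ × ℝ => h p.1 p.2) p (0, 1) := by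
    funext p
    exact (deriv_section_hasDeriv hs p.1 p.2).deriv
  rw [he]
  exact (hs.continuous_fderiv (by simp)).clm_apply continuous_const

lemma SM_sq {α : Type*} [MeasurableSpace α] {f : α → ℝ} (hf : StronglyMeasurable f) :
    StronglyMeasurable (fun x => (f x) ^ 2) := by
  exact (continuous_pow 2).comp_stronglyMeasurable hf

/-- estimate of the electric-field term
`⟨E(∂ᵥ − v/2)h, h⟩ ≤ ‖E‖_∞ ((ε/2)‖h‖² + (1/(2ε))‖(1−Π)h‖_ω²)` for `0 < ε ≤ 1`. -/
theorem stmt14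
    (ε Esup : ℝ) (E : ℝ → ℝ) (h : ℝ → ℝ → ℝ)
    (hε : 0 < ε) (hε1 : ε ≤ 1)
    (hsmooth : ContDiff ℝ (⊤ : ℕ∞) (fun p : ℝ × ℝ => h p.1 p.2))
    -- ‖h‖_ω < ∞ and rapid decay in v
    (hdecay : ∀ x : ℝ, ∀ n : ℕ, Integrable (fun v : ℝ =>
      |v| ^ n * ((h x v) ^ 2 + (deriv (h x) v) ^ 2)))
    (hout1 : IntervalIntegrable (fun x => ∫ v : ℝ, (h x v) ^ 2) volume 0 1)
    (hout2 : IntervalIntegrable (fun x => ∫ v : ℝ, (deriv (h x) v) ^ 2) volume 0 1)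
    (hout3 : IntervalIntegrable (fun x => ∫ v : ℝ, (v * h x v) ^ 2) volume 0 1)
    -- E is bounded on [0,1] by Esup (playing the role of ‖E‖_{L^∞})
    (hEb : ∀ x ∈ Icc (0:ℝ) 1, |E x| ≤ Esup) :
    (∫ x in (0:ℝ)..1, ∫ v : ℝ, E x * (deriv (h x) v - (v / 2) * h x v) * h x v)
      ≤ Esup * ((ε / 2) * nSq h
          + (1 / (2 * ε)) * nOmSq (fun x v => h x v - Proj h x v)) := by
  have hsMc := sM_cont
  have hcontH : Continuous fun p : ℝ × ℝ => h p.1 p.2 := hsmooth.continuous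
  have hsec : ∀ x : ℝ, ContDiff ℝ (⊤ : ℕ∞) (h x) := fun x =>
    hsmooth.comp (contDiff_const.prodMk contDiff_id)
  have hfc : ∀ x : ℝ, Continuous (h x) := fun x => (hsec x).continuous
  have hDc := deriv_section_cont hsmooth
  have hf'c : ∀ x : ℝ, Continuous (deriv (h x)) := fun x =>
    hDc.comp (Continuous.prodMk_right x)
  have hder : ∀ x v : ℝ, HasDerivAt (h x) (deriv (h x) v) v := fun x v =>
    (((hsec x).differentiable (by simp)) v).hasDerivAt
  have hEsup0 : 0 ≤ Esup := (abs_nonneg (E 0)).trans (hEb 0 ⟨le_refl 0, zero_le_one⟩)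
  have hgderiv : ∀ x v : ℝ, deriv (fun v => h x v - (∫ w : ℝ, h x w * sM w) * sM v) v
      = deriv (h x) v + (∫ w : ℝ, h x w * sM w) * (v / 2) * sM v := by
    intro x v
    have hg : HasDerivAt (fun v => h x v - (∫ w : ℝ, h x w * sM w) * sM v)
        (deriv (h x) v + (∫ w : ℝ, h x w * sM w) * (v / 2) * sM v) v := by
      have := (hder x v).sub ((sM_hasDeriv v).const_mul (∫ w : ℝ, h x w * sM w))
      refine this.congr_deriv ?_; ring
    exact hg.deriv
  simp only [nSq, nOmSq, Proj]
  simp only [hgderiv]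
  -- nonnegativity of all the double integrals
  have hinner_nonneg : ∀ G : ℝ → ℝ → ℝ, (0:ℝ) ≤ ∫ x in (0:ℝ)..1, ∫ v : ℝ, (G x v) ^ 2 :=
    fun G => intervalIntegral.integral_nonneg zero_le_one
      (fun x _ => integral_nonneg fun v => sq_nonneg _)
  by_cases hFI : IntervalIntegrable
      (fun x => ∫ v : ℝ, E x * (deriv (h x) v - v / 2 * h x v) * h x v) volume 0 1
  · -- measurability of the inner-integral functions
    have hQm : StronglyMeasurable
        (fun x : ℝ => ∫ v : ℝ, (h x v - (∫ w : ℝ, h x w * sM w) * sM v) ^ 2) := by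
      apply StronglyMeasurable.integral_prod_right'
        (f := fun p : ℝ × ℝ => (h p.1 p.2 - (∫ w : ℝ, h p.1 w * sM w) * sM p.2) ^ 2)
      apply SM_sq
      have hmc : StronglyMeasurable (fun x : ℝ => ∫ w : ℝ, h x w * sM w) :=
        StronglyMeasurable.integral_prod_right'
          (f := fun p : ℝ × ℝ => h p.1 p.2 * sM p.2)
          (Continuous.stronglyMeasurable (by fun_prop))
      exact hcontH.stronglyMeasurable.sub
        ((hmc.comp_measurable measurable_fst).mul
          (hsMc.stronglyMeasurable.comp_measurable measurable_snd))
    have hRm : StronglyMeasurable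
        (fun x : ℝ => ∫ v : ℝ, (deriv (h x) v + (∫ w : ℝ, h x w * sM w) * (v / 2) * sM v) ^ 2) := by
      apply StronglyMeasurable.integral_prod_right'
        (f := fun p : ℝ × ℝ =>
          (deriv (h p.1) p.2 + (∫ w : ℝ, h p.1 w * sM w) * (p.2 / 2) * sM p.2) ^ 2)
      apply SM_sq
      have hmc : StronglyMeasurable (fun x : ℝ => ∫ w : ℝ, h x w * sM w) :=
        StronglyMeasurable.integral_prod_right'
          (f := fun p : ℝ × ℝ => h p.1 p.2 * sM p.2)
          (Continuous.stronglyMeasurable (by fun_prop))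
      exact hDc.stronglyMeasurable.add
        (((hmc.comp_measurable measurable_fst).mul
            ((continuous_snd.div_const 2).stronglyMeasurable)).mul
          (hsMc.stronglyMeasurable.comp_measurable measurable_snd))
    have hSm : StronglyMeasurable
        (fun x : ℝ => ∫ v : ℝ, (v * (h x v - (∫ w : ℝ, h x w * sM w) * sM v)) ^ 2) := by
      apply StronglyMeasurable.integral_prod_right'
        (f := fun p : ℝ × ℝ => (p.2 * (h p.1 p.2 - (∫ w : ℝ, h p.1 w * sM w) * sM p.2)) ^ 2)
      apply SM_sq
      have hmc : StronglyMeasurable (fun x : ℝ => ∫ w : ℝ, h x w * sM w) :=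
        StronglyMeasurable.integral_prod_right'
          (f := fun p : ℝ × ℝ => h p.1 p.2 * sM p.2)
          (Continuous.stronglyMeasurable (by fun_prop))
      exact continuous_snd.stronglyMeasurable.mul
        (hcontH.stronglyMeasurable.sub
          ((hmc.comp_measurable measurable_fst).mul
            (hsMc.stronglyMeasurable.comp_measurable measurable_snd)))
    -- interval integrability of Q, R, S
    have h01 : (0:ℝ) ≤ 1 := zero_le_one
    have hout1' := (intervalIntegrable_iff_integrableOn_Ioc_of_le h01).mp hout1
    have hout2' := (intervalIntegrable_iff_integrableOn_Ioc_of_le h01).mp hout2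
    have hout3' := (intervalIntegrable_iff_integrableOn_Ioc_of_le h01).mp hout3
    have hQint : IntervalIntegrable
        (fun x => ∫ v : ℝ, (h x v - (∫ w : ℝ, h x w * sM w) * sM v) ^ 2) volume 0 1 := by
      rw [intervalIntegrable_iff_integrableOn_Ioc_of_le h01]
      apply hout1'.mono' hQm.aestronglyMeasurable.restrict
      filter_upwards with x
      rw [Real.norm_eq_abs, abs_of_nonneg (integral_nonneg fun v => sq_nonneg _)]
      exact bound_Q (h x) (deriv (h x)) _ (hfc x) (hdecay x) rfl
    have hRint : IntervalIntegrable
        (fun x => ∫ v : ℝ, (deriv (h x) v + (∫ w : ℝ, h x w * sM w) * (v / 2) * sM v) ^ 2)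
        volume 0 1 := by
      rw [intervalIntegrable_iff_integrableOn_Ioc_of_le h01]
      apply Integrable.mono' ((hout2'.const_mul 2).add
        (hout1'.const_mul ((∫ v : ℝ, |v| ^ 2 * sM v ^ 2) / 2)))
        hRm.aestronglyMeasurable.restrict
      filter_upwards with x
      rw [Real.norm_eq_abs, abs_of_nonneg (integral_nonneg fun v => sq_nonneg _)]
      exact bound_R (h x) (deriv (h x)) _ (hfc x) (hf'c x) (hdecay x) rfl
    have hSint : IntervalIntegrable
        (fun x => ∫ v : ℝ, (v * (h x v - (∫ w : ℝ, h x w * sM w) * sM v)) ^ 2) volume 0 1 := by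
      rw [intervalIntegrable_iff_integrableOn_Ioc_of_le h01]
      apply Integrable.mono' ((hout3'.const_mul 2).add
        (hout1'.const_mul (2 * ∫ v : ℝ, |v| ^ 2 * sM v ^ 2)))
        hSm.aestronglyMeasurable.restrict
      filter_upwards with x
      rw [Real.norm_eq_abs, abs_of_nonneg (integral_nonneg fun v => sq_nonneg _)]
      exact bound_S (h x) (deriv (h x)) _ (hfc x) (hdecay x) rfl
    have hMint : IntervalIntegrable (fun x =>
        Esup * (ε / 2 * (∫ v : ℝ, (h x v) ^ 2)
          + 1 / (2 * ε) * ((∫ v : ℝ, (h x v - (∫ w : ℝ, h x w * sM w) * sM v) ^ 2)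
            + (∫ v : ℝ, (deriv (h x) v + (∫ w : ℝ, h x w * sM w) * (v / 2) * sM v) ^ 2)
            + ∫ v : ℝ, (v * (h x v - (∫ w : ℝ, h x w * sM w) * sM v)) ^ 2))) volume 0 1 :=
      (((hout1.const_mul (ε / 2)).add
        (((hQint.add hRint).add hSint).const_mul (1 / (2 * ε)))).const_mul Esup)
    have hmono : (∫ x in (0:ℝ)..1, ∫ v : ℝ, E x * (deriv (h x) v - v / 2 * h x v) * h x v)
        ≤ ∫ x in (0:ℝ)..1,
          Esup * (ε / 2 * (∫ v : ℝ, (h x v) ^ 2)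
            + 1 / (2 * ε) * ((∫ v : ℝ, (h x v - (∫ w : ℝ, h x w * sM w) * sM v) ^ 2)
              + (∫ v : ℝ, (deriv (h x) v + (∫ w : ℝ, h x w * sM w) * (v / 2) * sM v) ^ 2)
              + ∫ v : ℝ, (v * (h x v - (∫ w : ℝ, h x w * sM w) * sM v)) ^ 2)) := by
      apply intervalIntegral.integral_mono_on h01 hFI hMint
      intro x hx
      exact perx ε Esup (E x) (h x) (deriv (h x)) (∫ w : ℝ, h x w * sM w) hε
        (hder x) (hfc x) (hf'c x) (hdecay x) (hEb x hx)
    refine hmono.trans_eq ?_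
    rw [intervalIntegral.integral_const_mul,
      intervalIntegral.integral_add (hout1.const_mul (ε / 2))
        (((hQint.add hRint).add hSint).const_mul (1 / (2 * ε))),
      intervalIntegral.integral_const_mul, intervalIntegral.integral_const_mul,
      intervalIntegral.integral_add (hQint.add hRint) hSint,
      intervalIntegral.integral_add hQint hRint]
  · rw [intervalIntegral.integral_undef hFI]
    have h1 := hinner_nonneg (fun x v => h x v)
    have h2 := hinner_nonneg (fun x v => h x v - (∫ w : ℝ, h x w * sM w) * sM v)
    have h3 := hinner_nonneg
      (fun x v => deriv (h x) v + (∫ w : ℝ, h x w * sM w) * (v / 2) * sM v)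
    have h4 := hinner_nonneg (fun x v => v * (h x v - (∫ w : ℝ, h x w * sM w) * sM v))
    have hc1 : (0:ℝ) ≤ ε / 2 := by positivity
    have hc2 : (0:ℝ) ≤ 1 / (2 * ε) := by positivity
    positivity
end

section
/- Let h = h(t,x,v) satisfy at a fixed t the boundary conditions h(t,0,v) = k₀₀ h(t,0,−v) + k₁₀ h(t,1,v) for v > 0 and h(t,1,v) = k₀₁ h(t,0,v) + k₁₁ h(t,1,−v) for v < 0, with |v|h(t,x,·)² integrable for x ∈ {0,1}, and assume k₀₀ + k₀₁ = 1 and k₁₁ + k₁₀ = 1. Then −∫_ℝ (v/2)(h²(t,1,v) − h²(t,0,v)) dv ≤ −2k₀₀(1 − k₀₀)A − 2k₁₁(1 − k₁₁)B + 2|k₁₁(1 − k₀₀) + k₀₀(1 − k₁₁)|√(AB), where A = −∫_{−∞}^0 (v/2) h(t,0,v)² dv and B = ∫_0^∞ (v/2) h(t,1,v)² dv. -/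
open MeasureTheory Real Set

/-!
Unfold the velocity integral onto `v > 0`: there the two incoming traces `h(t,0,v)`, `h(t,1,-v)`
are, by the boundary conditions, linear combinations of the two outgoing traces
`a(v) = h(t,0,-v)` and `b(v) = h(t,1,v)`. The boundary term is then the quadratic form
`∫ (v/2) ((k₀₀a + k₁₀b)² + (k₀₁a + k₁₁b)² - a² - b²) dv`; since `k₀₀ + k₀₁ = 1 = k₁₁ + k₁₀` its
diagonal coefficients are `-2k₀₀(1-k₀₀)` and `-2k₁₁(1-k₁₁)`, and its cross term
`2(k₁₁(1-k₀₀) + k₀₀(1-k₁₁)) ∫ (v/2) a b` is bounded by the weighted Cauchy–Schwarz inequality.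
-/

section HalfLine

variable {E : Type*} [NormedAddCommGroup E] [NormedSpace ℝ E]

lemma integrable_half_mul_of_integrable_abs_mul {φ : ℝ → ℝ}
    (hφ : Integrable (fun v => |v| * φ v)) : Integrable (fun v => v / 2 * φ v) := by
  rw [← integrableOn_univ, ← Iic_union_Ioi (a := (0 : ℝ))]
  refine IntegrableOn.union ?_ ?_
  · refine (hφ.const_mul (-1 / 2)).integrableOn.congr_fun (fun v hv => ?_) measurableSet_Iic
    simp only [abs_of_nonpos (mem_Iic.mp hv)]
    ring
  · refine (hφ.const_mul (1 / 2)).integrableOn.congr_fun (fun v hv => ?_) measurableSet_Ioi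
    simp only [abs_of_pos (mem_Ioi.mp hv)]
    ring

lemma setIntegral_Iio_zero_eq_setIntegral_Ioi_comp_neg (f : ℝ → E) :
    ∫ v in Iio (0 : ℝ), f v = ∫ v in Ioi (0 : ℝ), f (-v) := by
  rw [integral_comp_neg_Ioi, neg_zero]
  exact setIntegral_congr_set Iio_ae_eq_Iic

lemma integral_eq_setIntegral_Ioi_zero_add_comp_neg {f : ℝ → E} (hf : Integrable f) :
    ∫ v, f v = ∫ v in Ioi (0 : ℝ), (f v + f (-v)) := by
  rw [← intervalIntegral.integral_Iic_add_Ioi hf.integrableOn hf.integrableOn,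
    integral_add hf.integrableOn hf.comp_neg.integrableOn, add_comm, integral_comp_neg_Ioi,
    neg_zero]

end HalfLine

section WeightedIntegrals

variable {α : Type*} [MeasurableSpace α] {μ : Measure α}

lemma integral_eq_of_ae_eq_linear_combination {I F G H : α → ℝ} {a b c : ℝ}
    (hI : Integrable I μ) (hF : Integrable F μ) (hG : Integrable G μ)
    (hIFGH : ∀ᵐ x ∂μ, I x = a * F x + b * G x + c * H x) :
    ∫ x, I x ∂μ = a * ∫ x, F x ∂μ + b * ∫ x, G x ∂μ + c * ∫ x, H x ∂μ := by
  have hH : Integrable (fun x => c * H x) μ := by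
    refine ((hI.sub (hF.const_mul a)).sub (hG.const_mul b)).congr ?_
    filter_upwards [hIFGH] with x hx
    simp only [Pi.sub_apply, hx]
    ring
  rw [integral_congr_ae hIFGH,
    integral_add (f := fun x => a * F x + b * G x) ((hF.const_mul a).add (hG.const_mul b)) hH,
    integral_add (hF.const_mul a) (hG.const_mul b), integral_const_mul, integral_const_mul,
    integral_const_mul]

/-- No integrability of the cross term is needed: otherwise its integral is `0`. -/
theorem abs_integral_weight_mul_mul_le_sqrt {w f g : α → ℝ} (hw : ∀ᵐ x ∂μ, 0 ≤ w x)
    (hf : Integrable (fun x => w x * f x ^ 2) μ) (hg : Integrable (fun x => w x * g x ^ 2) μ) :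
    |∫ x, w x * (f x * g x) ∂μ| ≤ √((∫ x, w x * f x ^ 2 ∂μ) * ∫ x, w x * g x ^ 2 ∂μ) := by
  by_cases hfg : Integrable (fun x => w x * (f x * g x)) μ
  swap
  · rw [integral_undef hfg, abs_zero]
    exact sqrt_nonneg _
  refine abs_le_sqrt ?_
  have hquadratic : ∀ θ : ℝ, 0 ≤ (∫ x, w x * f x ^ 2 ∂μ) * (θ * θ)
      + 2 * (∫ x, w x * (f x * g x) ∂μ) * θ + ∫ x, w x * g x ^ 2 ∂μ := by
    intro θ
    have hnonneg : 0 ≤ ∫ x, w x * (θ * f x + g x) ^ 2 ∂μ :=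
      integral_nonneg_of_ae (hw.mono fun x hx => mul_nonneg hx (sq_nonneg _))
    have hexpand : ∀ x, w x * (θ * f x + g x) ^ 2
        = θ ^ 2 * (w x * f x ^ 2) + 2 * θ * (w x * (f x * g x)) + w x * g x ^ 2 :=
      fun x => by ring
    simp_rw [hexpand] at hnonneg
    rw [integral_add (f := fun x => θ ^ 2 * (w x * f x ^ 2) + 2 * θ * (w x * (f x * g x)))
      ((hf.const_mul _).add (hfg.const_mul _)) hg,
      integral_add (hf.const_mul _) (hfg.const_mul _), integral_const_mul,
      integral_const_mul] at hnonneg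
    linarith
  have := discrim_le_zero hquadratic
  rw [discrim] at this
  nlinarith

end WeightedIntegrals

lemma Abd_eq_setIntegral_Ioi (h : ℝ → ℝ → ℝ → ℝ) (t : ℝ) :
    Abd h t = ∫ v in Ioi 0, v / 2 * h t 0 (-v) ^ 2 := by
  rw [Abd, setIntegral_Iio_zero_eq_setIntegral_Ioi_comp_neg, ← integral_neg]
  simp only [neg_div, neg_mul, neg_neg]

/-- boundary estimate for the zeroth-order boundary term:
`−∫ (v/2)(h²(t,1,v) − h²(t,0,v)) dv ≤ −2k₀₀(1−k₀₀)A − 2k₁₁(1−k₁₁)B`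
`+ 2|k₁₁(1−k₀₀) + k₀₀(1−k₁₁)|√(AB)` under the feedback boundary conditions with
`k₀₀ + k₀₁ = 1` and `k₁₁ + k₁₀ = 1`. -/
theorem stmt17
    (h : ℝ → ℝ → ℝ → ℝ) (k00 k01 k10 k11 t : ℝ)
    (hint0 : Integrable (fun v : ℝ => |v| * (h t 0 v) ^ 2))
    (hint1 : Integrable (fun v : ℝ => |v| * (h t 1 v) ^ 2))
    (hbc0 : ∀ v > (0:ℝ), h t 0 v = k00 * h t 0 (-v) + k10 * h t 1 v)
    (hbc1 : ∀ v < (0:ℝ), h t 1 v = k01 * h t 0 v + k11 * h t 1 (-v))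
    (hk1 : k00 + k01 = 1) (hk2 : k11 + k10 = 1) :
    -(∫ v : ℝ, (v / 2) * ((h t 1 v) ^ 2 - (h t 0 v) ^ 2))
      ≤ -2 * k00 * (1 - k00) * Abd h t - 2 * k11 * (1 - k11) * Bbd h t
        + 2 * |k11 * (1 - k00) + k00 * (1 - k11)| * Real.sqrt (Abd h t * Bbd h t) := by
  obtain rfl : k01 = 1 - k00 := by linarith
  obtain rfl : k10 = 1 - k11 := by linarith
  set q := k11 * (1 - k00) + k00 * (1 - k11)
  have hflux : Integrable (fun v => -(v / 2 * (h t 1 v ^ 2 - h t 0 v ^ 2))) :=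
    (integrable_half_mul_of_integrable_abs_mul
      (by simpa only [Pi.sub_def, mul_sub] using hint1.sub hint0)).neg
  have hA_int : IntegrableOn (fun v => v / 2 * h t 0 (-v) ^ 2) (Ioi 0) :=
    (integrable_half_mul_of_integrable_abs_mul
      (by simpa only [abs_neg] using hint0.comp_neg)).integrableOn
  have hB_int : IntegrableOn (fun v => v / 2 * h t 1 v ^ 2) (Ioi 0) :=
    (integrable_half_mul_of_integrable_abs_mul hint1).integrableOn
  have hA := Abd_eq_setIntegral_Ioi h t
  have hB : Bbd h t = ∫ v in Ioi 0, v / 2 * h t 1 v ^ 2 := rfl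
  have hquadratic : ∀ v ∈ Ioi (0 : ℝ),
      -(v / 2 * (h t 1 v ^ 2 - h t 0 v ^ 2)) + -(-v / 2 * (h t 1 (-v) ^ 2 - h t 0 (-v) ^ 2))
        = -2 * k00 * (1 - k00) * (v / 2 * h t 0 (-v) ^ 2)
          + -2 * k11 * (1 - k11) * (v / 2 * h t 1 v ^ 2)
          + 2 * q * (v / 2 * (h t 0 (-v) * h t 1 v)) := by
    intro v hv
    have hout1 := hbc1 (-v) (neg_neg_of_pos hv)
    rw [neg_neg] at hout1
    rw [hbc0 v hv, hout1]
    ring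
  have hreduce : -(∫ v, v / 2 * (h t 1 v ^ 2 - h t 0 v ^ 2))
      = -2 * k00 * (1 - k00) * Abd h t + -2 * k11 * (1 - k11) * Bbd h t
        + 2 * q * ∫ v in Ioi 0, v / 2 * (h t 0 (-v) * h t 1 v) := by
    rw [← integral_neg, integral_eq_setIntegral_Ioi_zero_add_comp_neg hflux, hA, hB]
    exact integral_eq_of_ae_eq_linear_combination (hflux.add hflux.comp_neg).integrableOn
      hA_int hB_int ((ae_restrict_mem measurableSet_Ioi).mono hquadratic)
  have hcross := abs_integral_weight_mul_mul_le_sqrt (w := fun v => v / 2)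
    (f := fun v => h t 0 (-v)) (g := h t 1)
    ((ae_restrict_mem measurableSet_Ioi).mono fun v (hv : 0 < v) => (half_pos hv).le) hA_int hB_int
  rw [← hA, ← hB] at hcross
  have hqD := (le_abs_self (q * ∫ v in Ioi 0, v / 2 * (h t 0 (-v) * h t 1 v))).trans
    ((abs_mul _ _).trans_le (mul_le_mul_of_nonneg_left hcross (abs_nonneg q)))
  linarith
end

section
/- Let h = h(t,x,v) satisfy at a fixed t the boundary conditions h(t,0,v) = k₀₀ h(t,0,−v) + k₁₀ h(t,1,v) for v > 0 and h(t,1,v) = k₀₁ h(t,0,v) + k₁₁ h(t,1,−v) for v < 0, together with ∂_x h(t,0,v) = −k₀₀ ∂_x h(t,0,−v) + k₁₀ ∂_x h(t,1,v) for v > 0 and ∂_x h(t,1,v) = k₀₁ ∂_x h(t,0,v) − k₁₁ ∂_x h(t,1,−v) for v < 0, with |v|h(t,x,·)² and |v|(∂_x h)(t,x,·)² integrable for x ∈ {0,1}. Assume 1 − k₁₁ = k₁₀ = 1 − k₀₀ (so k₀₀ = k₁₁) and k₀₁ = 1 − k₁₁. Then −u∂_x u(t,1) + u∂_x u(t,0)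 ≤ 4(|1 − k₁₁|√B + |1 − k₀₀|√A)(|k₀₀|√A_x + |k₁₁|√B_x), where u(t,x) = ∫_ℝ v h√M dv. -/
/-!
With `k₁₀ = k₀₁ = 1 - k` for `k = k₀₀ = k₁₁`, integrating the boundary conditions against
`v √M` and reflecting `v ↦ -v` (`√M` is even) writes everything through the outgoing half-fluxes
`a = ∫_{v<0} v h(0) √M`, `b = ∫_{v>0} v h(1) √M` and their analogues `p`, `q` for `∂ₓh`:
`u(0) = u(1) = (1 - k)(a + b)` and `∂ₓu(0) - ∂ₓu(1) = 2k(p - q)`. Cauchy–Schwarz with weight `|v|`,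
together with `∫ |v| M ≤ 1`, bounds `|a| ≤ √(2A)`, `|b| ≤ √(2B)`, `|p| ≤ √(2Aₓ)`, `|q| ≤ √(2Bₓ)`.
-/
open MeasureTheory Real Set

theorem abs_integral_mul_mul_le_sqrt {α : Type*} [MeasurableSpace α] {μ : Measure α}
    {ω φ ψ : α → ℝ} (hφ : Integrable (fun a => |ω a| * φ a ^ 2) μ)
    (hψ : Integrable (fun a => |ω a| * ψ a ^ 2) μ) :
    |∫ a, ω a * φ a * ψ a ∂μ|
      ≤ √(∫ a, |ω a| * φ a ^ 2 ∂μ) * √(∫ a, |ω a| * ψ a ^ 2 ∂μ) := by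
  have memLp_sqrt {f : α → ℝ} (hf : Integrable f μ) (hf0 : 0 ≤ f) :
      MemLp (fun a => √(f a)) (ENNReal.ofReal 2) μ := by
    rw [ENNReal.ofReal_ofNat, memLp_two_iff_integrable_sq
      (continuous_sqrt.comp_aestronglyMeasurable hf.aestronglyMeasurable)]
    simpa only [sq_sqrt (hf0 _)] using hf
  have hprod : ∀ a, |ω a * φ a * ψ a| = √(|ω a| * φ a ^ 2) * √(|ω a| * ψ a ^ 2) := by
    intro a
    have hsq : |ω a| * φ a ^ 2 * (|ω a| * ψ a ^ 2) = |ω a * φ a * ψ a| ^ 2 := by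
      rw [sq_abs, mul_pow, mul_pow, ← sq_abs (ω a)]; ring
    rw [← sqrt_mul (by positivity), hsq, sqrt_sq (abs_nonneg _)]
  calc |∫ a, ω a * φ a * ψ a ∂μ| ≤ ∫ a, |ω a * φ a * ψ a| ∂μ := abs_integral_le_integral_abs
    _ = ∫ a, √(|ω a| * φ a ^ 2) * √(|ω a| * ψ a ^ 2) ∂μ := by simp only [hprod]
    _ ≤ (∫ a, √(|ω a| * φ a ^ 2) ^ (2 : ℝ) ∂μ) ^ (1 / (2 : ℝ))
        * (∫ a, √(|ω a| * ψ a ^ 2) ^ (2 : ℝ) ∂μ) ^ (1 / (2 : ℝ)) :=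
      integral_mul_le_Lp_mul_Lq_of_nonneg Real.HolderConjugate.two_two
        (.of_forall fun _ => sqrt_nonneg _) (.of_forall fun _ => sqrt_nonneg _)
        (memLp_sqrt hφ fun _ => by positivity) (memLp_sqrt hψ fun _ => by positivity)
    _ = √(∫ a, |ω a| * φ a ^ 2 ∂μ) * √(∫ a, |ω a| * ψ a ^ 2 ∂μ) := by
      simp only [rpow_two, sq_sqrt (by positivity : (0:ℝ) ≤ |_| * _ ^ 2), ← sqrt_eq_rpow]

theorem integral_Ioi_mul_exp_neg_sq_div_two :
    ∫ v in Ioi 0, v * exp (-(v ^ 2) / 2) = 1 := by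
  have h := integral_mul_cexp_neg_mul_sq (b := 1 / 2) (by norm_num)
  norm_num at h
  rw [← Complex.ofReal_inj, ← integral_complex_ofReal, Complex.ofReal_one, ← h]
  congr 1; funext v; push_cast; ring_nf

theorem integrable_abs_mul_Mw : Integrable (fun v : ℝ => |v| * Mw v) := by
  have h := (integrable_mul_exp_neg_mul_sq (b := 1 / 2) (by norm_num)).abs.const_mul
    (√(2 * π))⁻¹
  refine h.congr (.of_forall fun v => ?_)
  simp only [Mw, abs_mul, abs_of_pos (exp_pos _)]
  ring_nf

theorem integral_abs_mul_Mw_le_one : ∫ v : ℝ, |v| * Mw v ≤ 1 := by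
  have habs : ∫ v : ℝ, |v| * exp (-(v ^ 2) / 2) = 2 := by
    have := integral_comp_abs (f := fun v : ℝ => v * exp (-(v ^ 2) / 2))
    simp only [sq_abs] at this
    rw [this, integral_Ioi_mul_exp_neg_sq_div_two]; norm_num
  have hsqrt : 2 ≤ √(2 * π) := le_sqrt_of_sq_le (by nlinarith [pi_gt_three])
  simp only [Mw, mul_left_comm |_|, integral_const_mul, habs]
  rw [inv_mul_le_iff₀ (by positivity)]
  linarith

theorem abs_setIntegral_mul_sM_le (S : Set ℝ) {φ : ℝ → ℝ}
    (hφ : Integrable (fun v => |v| * φ v ^ 2)) :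
    |∫ v in S, v * φ v * sM v| ≤ √(∫ v in S, |v| * φ v ^ 2) := by
  have hM : ∀ v, |v| * sM v ^ 2 = |v| * Mw v := fun v => by
    rw [sM, sq_sqrt (by unfold Mw; positivity)]
  have hmoment : ∫ v in S, |v| * sM v ^ 2 ≤ 1 := by
    simp only [hM]
    exact (setIntegral_le_integral integrable_abs_mul_Mw
      (.of_forall fun v => by unfold Mw; positivity)).trans integral_abs_mul_Mw_le_one
  calc |∫ v in S, v * φ v * sM v|
      ≤ √(∫ v in S, |v| * φ v ^ 2) * √(∫ v in S, |v| * sM v ^ 2) :=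
        abs_integral_mul_mul_le_sqrt hφ.restrict
          (by simp only [hM]; exact integrable_abs_mul_Mw.restrict)
    _ ≤ √(∫ v in S, |v| * φ v ^ 2) :=
        mul_le_of_le_one_right (sqrt_nonneg _) (sqrt_le_one.2 hmoment)

theorem abs_setIntegral_Iio_mul_sM_le {φ : ℝ → ℝ}
    (hφ : Integrable (fun v => |v| * φ v ^ 2)) :
    |∫ v in Iio 0, v * φ v * sM v| ≤ √2 * √(-∫ v in Iio 0, v / 2 * φ v ^ 2) := by
  rw [← sqrt_mul zero_le_two, ← integral_neg, ← integral_const_mul]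
  refine (abs_setIntegral_mul_sM_le _ hφ).trans_eq (congrArg sqrt ?_)
  refine setIntegral_congr_fun measurableSet_Iio fun v (hv : v < 0) => ?_
  rw [abs_of_neg hv]; ring

theorem abs_setIntegral_Ioi_mul_sM_le {φ : ℝ → ℝ}
    (hφ : Integrable (fun v => |v| * φ v ^ 2)) :
    |∫ v in Ioi 0, v * φ v * sM v| ≤ √2 * √(∫ v in Ioi 0, v / 2 * φ v ^ 2) := by
  rw [← sqrt_mul zero_le_two, ← integral_const_mul]
  refine (abs_setIntegral_mul_sM_le _ hφ).trans_eq (congrArg sqrt ?_)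
  refine setIntegral_congr_fun measurableSet_Ioi fun v (hv : 0 < v) => ?_
  rw [abs_of_pos hv]; ring

theorem sM_even : Function.Even sM := fun v => by simp only [sM, Mw, even_two.neg_pow]

theorem integral_eq_setIntegral_Iio_add_setIntegral_Ioi {f : ℝ → ℝ} (hf : Integrable f) :
    ∫ v, f v = (∫ v in Iio 0, f v) + ∫ v in Ioi 0, f v := by
  rw [← intervalIntegral.integral_Iic_add_Ioi (b := 0) hf.integrableOn hf.integrableOn,
    integral_Iic_eq_integral_Iio]

section EvenWeight

variable {w φ ρ : ℝ → ℝ}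

theorem setIntegral_Ioi_mul_comp_neg_of_even (hw : Function.Even w) :
    ∫ v in Ioi 0, v * φ (-v) * w v = -∫ v in Iio 0, v * φ v * w v := by
  have h := integral_comp_neg_Ioi 0 fun u => -(u * φ u * w u)
  simpa only [hw _, neg_mul, neg_neg, neg_zero, integral_Iic_eq_integral_Iio, integral_neg]
    using h

theorem setIntegral_Iio_mul_comp_neg_of_even (hw : Function.Even w) :
    ∫ v in Iio 0, v * φ (-v) * w v = -∫ v in Ioi 0, v * φ v * w v := by
  have h := integral_comp_neg_Iic 0 fun u => -(u * φ u * w u)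
  simpa only [hw _, neg_mul, neg_neg, neg_zero, integral_Iic_eq_integral_Iio, integral_neg]
    using h

theorem MeasureTheory.Integrable.mul_comp_neg_of_even (hw : Function.Even w)
    (hφ : Integrable fun v => v * φ v * w v) : Integrable fun v => v * φ (-v) * w v := by
  refine hφ.comp_neg.neg.congr (.of_forall fun v => ?_)
  change -(-v * φ (-v) * w (-v)) = _
  rw [hw v]; ring

theorem integral_mul_mul_eq_of_reflection_pos (hw : Function.Even w) {c d : ℝ}
    (hbc : ∀ v > 0, φ v = c * φ (-v) + d * ρ v)
    (hφ : Integrable fun v => v * φ v * w v) (hρ : Integrable fun v => v * ρ v * w v) :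
    ∫ v, v * φ v * w v
      = (1 - c) * (∫ v in Iio 0, v * φ v * w v) + d * ∫ v in Ioi 0, v * ρ v * w v := by
  have hIoi : ∫ v in Ioi 0, v * φ v * w v
      = ∫ v in Ioi 0, (c * (v * φ (-v) * w v) + d * (v * ρ v * w v)) :=
    setIntegral_congr_fun measurableSet_Ioi fun v hv => by rw [hbc v hv]; ring
  rw [integral_eq_setIntegral_Iio_add_setIntegral_Ioi hφ, hIoi,
    integral_add ((hφ.mul_comp_neg_of_even hw).integrableOn.const_mul c)
      (hρ.integrableOn.const_mul d),
    integral_const_mul, integral_const_mul, setIntegral_Ioi_mul_comp_neg_of_even hw]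
  ring

theorem integral_mul_mul_eq_of_reflection_neg (hw : Function.Even w) {c d : ℝ}
    (hbc : ∀ v < 0, φ v = c * ρ v + d * φ (-v))
    (hφ : Integrable fun v => v * φ v * w v) (hρ : Integrable fun v => v * ρ v * w v) :
    ∫ v, v * φ v * w v
      = c * (∫ v in Iio 0, v * ρ v * w v) + (1 - d) * ∫ v in Ioi 0, v * φ v * w v := by
  have hIio : ∫ v in Iio 0, v * φ v * w v
      = ∫ v in Iio 0, (c * (v * ρ v * w v) + d * (v * φ (-v) * w v)) :=
    setIntegral_congr_fun measurableSet_Iio fun v hv => by rw [hbc v hv]; ring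
  rw [integral_eq_setIntegral_Iio_add_setIntegral_Ioi hφ, hIio,
    integral_add (hρ.integrableOn.const_mul c)
      ((hφ.mul_comp_neg_of_even hw).integrableOn.const_mul d),
    integral_const_mul, integral_const_mul, setIntegral_Iio_mul_comp_neg_of_even hw]
  ring

end EvenWeight

theorem mul_mul_sub_le_four_mul_of_abs_le {k a b p q A B P Q : ℝ}
    (ha : |a| ≤ √2 * √A) (hb : |b| ≤ √2 * √B) (hp : |p| ≤ √2 * √P) (hq : |q| ≤ √2 * √Q) :
    (1 - k) * (a + b) * (2 * k * (p - q))
      ≤ 4 * (|1 - k| * √B + |1 - k| * √A) * (|k| * √P + |k| * √Q) := by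
  calc (1 - k) * (a + b) * (2 * k * (p - q))
      ≤ |1 - k| * (|a| + |b|) * (2 * |k| * (|p| + |q|)) := by
        refine (le_abs_self _).trans ?_
        simp only [abs_mul, abs_two]
        gcongr
        exacts [abs_add_le a b, abs_sub p q]
    _ ≤ |1 - k| * (√2 * √A + √2 * √B) * (2 * |k| * (√2 * √P + √2 * √Q)) := by gcongr
    _ = 4 * (|1 - k| * √B + |1 - k| * √A) * (|k| * √P + |k| * √Q) := by
        linear_combination (2 * |1 - k| * |k| * (√A + √B) * (√P + √Q)) * sq_sqrt zero_le_two

/-- boundary estimate for the flux term: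
`−u∂ₓu(t,1) + u∂ₓu(t,0) ≤ 4(|1−k₁₁|√B + |1−k₀₀|√A)(|k₀₀|√Aₓ + |k₁₁|√Bₓ)`
for feedback entries with `1 − k₁₁ = k₁₀ = 1 − k₀₀` and `k₀₁ = 1 − k₁₁`. -/
theorem stmt18
    (h : ℝ → ℝ → ℝ → ℝ) (k00 k01 k10 k11 t : ℝ)
    -- square integrability against |v| of h and ∂ₓh at the boundary
    (hint0 : Integrable (fun v : ℝ => |v| * (h t 0 v) ^ 2))
    (hint1 : Integrable (fun v : ℝ => |v| * (h t 1 v) ^ 2))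
    (hintx0 : Integrable (fun v : ℝ => |v| * (pdx (h t) 0 v) ^ 2))
    (hintx1 : Integrable (fun v : ℝ => |v| * (pdx (h t) 1 v) ^ 2))
    -- integrability of the flux integrands
    (hu0 : Integrable (fun v : ℝ => v * h t 0 v * sM v))
    (hu1 : Integrable (fun v : ℝ => v * h t 1 v * sM v))
    (hux0 : Integrable (fun v : ℝ => v * pdx (h t) 0 v * sM v))
    (hux1 : Integrable (fun v : ℝ => v * pdx (h t) 1 v * sM v))
    -- differentiation under the integral sign for the flux
    (hdiffux : ∀ x : ℝ, deriv (fun y => flux h t y) x = ∫ v : ℝ, v * pdx (h t) x v * sM v)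
    -- boundary conditions for h and ∂ₓh
    (hbc0 : ∀ v > (0:ℝ), h t 0 v = k00 * h t 0 (-v) + k10 * h t 1 v)
    (hbc1 : ∀ v < (0:ℝ), h t 1 v = k01 * h t 0 v + k11 * h t 1 (-v))
    (hbcx0 : ∀ v > (0:ℝ), pdx (h t) 0 v = -k00 * pdx (h t) 0 (-v) + k10 * pdx (h t) 1 v)
    (hbcx1 : ∀ v < (0:ℝ), pdx (h t) 1 v = k01 * pdx (h t) 0 v - k11 * pdx (h t) 1 (-v))
    (hk1 : 1 - k11 = k10) (hk2 : k10 = 1 - k00) (hk3 : k01 = 1 - k11) :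
    -(flux h t 1 * deriv (fun y => flux h t y) 1)
        + flux h t 0 * deriv (fun y => flux h t y) 0
      ≤ 4 * (|1 - k11| * Real.sqrt (Bbd h t) + |1 - k00| * Real.sqrt (Abd h t))
          * (|k00| * Real.sqrt (Axbd h t) + |k11| * Real.sqrt (Bxbd h t)) := by
  subst hk2 hk3
  obtain rfl : k11 = k00 := by linarith
  rw [hdiffux 0, hdiffux 1, flux, flux,
    integral_mul_mul_eq_of_reflection_pos sM_even hbc0 hu0 hu1,
    integral_mul_mul_eq_of_reflection_neg sM_even hbc1 hu1 hu0,
    integral_mul_mul_eq_of_reflection_pos sM_even hbcx0 hux0 hux1,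
    integral_mul_mul_eq_of_reflection_neg (c := 1 - k11) (d := -k11) sM_even
      (fun v hv => by rw [hbcx1 v hv]; ring) hux1 hux0]
  refine le_of_eq_of_le (by ring) (mul_mul_sub_le_four_mul_of_abs_le
    (abs_setIntegral_Iio_mul_sM_le hint0) (abs_setIntegral_Ioi_mul_sM_le hint1)
    (abs_setIntegral_Iio_mul_sM_le hintx0) (abs_setIntegral_Ioi_mul_sM_le hintx1))
end
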